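/- arXiv:0802.0566 — 4 statements merged into one kernel-verified Lean document; each statement's English description precedes it below -/
import Mathlib

section
/- Let n ≥ 1 be an integer and p ∈ (0,1] with np ≥ 1, and let Z follow the binomial distribution B(n,p). Define e(Z) := E[Z]·E[Z⁻¹ | Z > 0]. Then 1 − e^{−np} ≤ e(Z) ≤ min(3.2, 1 + 5.1·(np)^{−1/4}). -/
/-!
Write `μ = np`, `P = ℙ(Z > 0) = 1 - (1 - p)ⁿ` and `S = E[Z⁻¹; Z > 0]`, so that `e(Z) = μS/P`.
Cauchy–Schwarz gives `P² ≤ μS`, hence `e(Z) ≥ P ≥ 1 - e^{-μ}`. For the upper bounds `1/k` is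
compared with `1/(k+1)` and `1/((k+1)(k+2))`, whose binomial expectations are explicit by the
absorption identity `(k+1) C(n+1, k+1) = (n+1) C(n, k)`: `1/k ≤ 2/(k+1)` gives `μS ≤ 2P`, and
`1/k ≤ 1/(k+1) + 3/((k+1)(k+2))` gives `μS ≤ 1 + 3/μ`. As `P ≥ 1 - 1/μ`, the latter yields
`e(Z) ≤ 1 + 5.1 μ^{-1/4}` whenever that bound is below `2`.
-/

open MeasureTheory ProbabilityTheory Finset
open scoped unitInterval

lemma sq_sum_filter_pos_le_sum_mul_sum_inv {s : Finset ℕ} {w : ℕ → ℝ} (hw : ∀ k ∈ s, 0 ≤ w k) :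
    (∑ k ∈ s with 0 < k, w k) ^ 2 ≤ (∑ k ∈ s, w k * k) * ∑ k ∈ s, w k * (k : ℝ)⁻¹ := by
  rw [sum_filter]
  refine sum_sq_le_sum_mul_sum_of_sq_le_mul s (fun k hk => mul_nonneg (hw k hk) k.cast_nonneg)
    (fun k hk => mul_nonneg (hw k hk) (inv_nonneg.2 k.cast_nonneg)) fun k _ => ?_
  rcases k.eq_zero_or_pos with rfl | hk
  · simp
  · have hk0 : (k : ℝ) ≠ 0 := by positivity
    rw [if_pos hk, mul_mul_mul_comm, mul_inv_cancel₀ hk0, mul_one, sq]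

lemma one_add_three_div_pow_four_le {t : ℝ} (ht : 2 ≤ t) :
    1 + 3 / t ^ 4 ≤ (1 + 5.1 / t) * (1 - 1 / t ^ 4) := by
  have ht0 : 0 < t := by linarith
  have key : (1 + 5.1 / t) * (1 - 1 / t ^ 4) - (1 + 3 / t ^ 4)
      = (5.1 * t ^ 4 - 4 * t - 5.1) / t ^ 5 := by
    field_simp
    ring
  rw [← sub_nonneg, key]
  exact div_nonneg (by nlinarith [pow_le_pow_left₀ (by norm_num) ht 3]) (by positivity)

lemma one_sub_pow_le_exp_neg_mul {p : ℝ} (hp1 : p ≤ 1) (n : ℕ) :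
    (1 - p) ^ n ≤ Real.exp (-(n * p)) := by
  rw [show -(n * p) = n * -p by ring, Real.exp_nat_mul]
  exact pow_le_pow_left₀ (sub_nonneg.2 hp1) (Real.one_sub_le_exp_neg p) n

lemma div_le_one_add_mul_rpow {μ P x : ℝ} (hμ : 0 < μ) (hP0 : 0 < P)
    (hP : 1 - Real.exp (-μ) ≤ P) (h2 : x ≤ 2 * P) (h3 : x ≤ 1 + 3 / μ) :
    x / P ≤ 1 + 5.1 * μ ^ (-(1 / 4 : ℝ)) := by
  by_cases hsmall : 1 ≤ 5.1 * μ ^ (-(1 / 4 : ℝ))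
  · linarith [(div_le_iff₀ hP0).2 h2]
  set t := μ ^ (1 / 4 : ℝ) with ht
  have ht0 : 0 < t := by positivity
  have hμt : μ = t ^ 4 := by
    rw [ht, ← Real.rpow_natCast, ← Real.rpow_mul hμ.le]
    norm_num
  rw [Real.rpow_neg hμ.le, ← ht, ← div_eq_mul_inv] at hsmall ⊢
  have ht2 : 2 ≤ t := by
    rw [not_le, div_lt_one ht0] at hsmall
    linarith
  have hPμ : 1 - 1 / μ ≤ P := by
    have : Real.exp (-μ) ≤ 1 / μ := by
      rw [Real.exp_neg, one_div]
      exact inv_anti₀ hμ (by linarith [Real.add_one_le_exp μ])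
    linarith
  rw [div_le_iff₀ hP0]
  calc x ≤ 1 + 3 / t ^ 4 := hμt ▸ h3
    _ ≤ (1 + 5.1 / t) * (1 - 1 / t ^ 4) := one_add_three_div_pow_four_le ht2
    _ ≤ (1 + 5.1 / t) * P := by gcongr; exact hμt ▸ hPμ

def binomialWeight (n : ℕ) (p : ℝ) (k : ℕ) : ℝ := n.choose k * p ^ k * (1 - p) ^ (n - k)

namespace binomialWeight

variable {n k : ℕ} {p : ℝ}

@[simp]
lemma zero_right : binomialWeight n p 0 = (1 - p) ^ n := by simp [binomialWeight]

lemma nonneg (hp0 : 0 ≤ p) (hp1 : p ≤ 1) : 0 ≤ binomialWeight n p k := by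
  unfold binomialWeight
  have : 0 ≤ 1 - p := by linarith
  positivity

lemma sum_eq_one (n : ℕ) (p : ℝ) : ∑ k ∈ range (n + 1), binomialWeight n p k = 1 := by
  calc _ = (p + (1 - p)) ^ n := by
        rw [add_pow]
        exact sum_congr rfl fun k _ => by unfold binomialWeight; ring
    _ = 1 := by simp

lemma succ_mul_succ_succ (n k : ℕ) (p : ℝ) :
    (k + 1) * binomialWeight (n + 1) p (k + 1) = (n + 1) * p * binomialWeight n p k := by
  have h : ((n + 1 : ℕ) : ℝ) * n.choose k = (n + 1).choose (k + 1) * (k + 1 : ℕ) := by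
    exact_mod_cast Nat.add_one_mul_choose_eq n k
  push_cast at h
  simp only [binomialWeight, Nat.add_sub_add_right, pow_succ]
  linear_combination (-(p ^ k * p * (1 - p) ^ (n - k))) * h

lemma sum_mul_cast (n : ℕ) (p : ℝ) :
    ∑ k ∈ range (n + 1), binomialWeight n p k * k = n * p := by
  cases n with
  | zero => simp
  | succ m =>
    rw [sum_range_succ', Nat.cast_zero, mul_zero, add_zero]
    calc ∑ k ∈ range (m + 1), binomialWeight (m + 1) p (k + 1) * ((k + 1 : ℕ) : ℝ)
        = ∑ k ∈ range (m + 1), (m + 1) * p * binomialWeight m p k := by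
          refine sum_congr rfl fun k _ => ?_
          rw [← succ_mul_succ_succ]
          push_cast
          ring
      _ = (m + 1 : ℕ) * p := by rw [← mul_sum, sum_eq_one]; push_cast; ring

lemma mul_sum_div_succ (n : ℕ) (p : ℝ) :
    (n + 1) * p * ∑ k ∈ range (n + 1), binomialWeight n p k / (k + 1) = 1 - (1 - p) ^ (n + 1) := by
  have h := sum_eq_one (n + 1) p
  rw [sum_range_succ', zero_right] at h
  rw [← eq_sub_iff_add_eq] at h
  rw [← h, mul_sum]
  refine sum_congr rfl fun k _ => ?_
  rw [mul_div_assoc', ← succ_mul_succ_succ]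
  field_simp

lemma mul_sum_div_succ_mul_succ_le (hp0 : 0 ≤ p) (hp1 : p ≤ 1) (n : ℕ) :
    (n + 1) * (n + 2) * p ^ 2 * ∑ k ∈ range (n + 1), binomialWeight n p k / ((k + 1) * (k + 2))
      ≤ 1 := by
  have hshift : (n + 1) * p * ∑ k ∈ range (n + 1), binomialWeight n p k / ((k + 1) * (k + 2))
      ≤ ∑ j ∈ range (n + 2), binomialWeight (n + 1) p j / (j + 1) := by
    rw [sum_range_succ' _ (n + 1), mul_sum]
    refine le_add_of_le_of_nonneg (sum_congr rfl fun k _ => ?_).le (by simp; positivity)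
    rw [mul_div_assoc', ← succ_mul_succ_succ]
    push_cast
    field_simp
    ring
  calc (n + 1) * (n + 2) * p ^ 2 * ∑ k ∈ range (n + 1), binomialWeight n p k / ((k + 1) * (k + 2))
      = (n + 2) * p * ((n + 1) * p * ∑ k ∈ range (n + 1),
          binomialWeight n p k / ((k + 1) * (k + 2))) := by ring
    _ ≤ ((n + 1 : ℕ) + 1) * p * ∑ j ∈ range (n + 1 + 1), binomialWeight (n + 1) p j / (j + 1) := by
      push_cast
      rw [add_assoc, one_add_one_eq_two]
      gcongr
    _ = 1 - (1 - p) ^ (n + 2) := mul_sum_div_succ (n + 1) p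
    _ ≤ 1 := sub_le_self _ (pow_nonneg (sub_nonneg.2 hp1) _)

lemma sum_inv_le_two_mul_sum_div_succ (hp0 : 0 ≤ p) (hp1 : p ≤ 1) (n : ℕ) :
    ∑ k ∈ range (n + 1), binomialWeight n p k * (k : ℝ)⁻¹
      ≤ 2 * ∑ k ∈ range (n + 1), binomialWeight n p k / (k + 1) - 2 * (1 - p) ^ n := by
  have h : ∑ k ∈ range (n + 1), binomialWeight n p k * (k : ℝ)⁻¹
      ≤ ∑ k ∈ range (n + 1), (2 * (binomialWeight n p k / (k + 1))
          - 2 * if k = 0 then binomialWeight n p k else 0) := by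
    refine sum_le_sum fun k _ => ?_
    rcases k.eq_zero_or_pos with rfl | hk
    · simp
    · have hk' : (1 : ℝ) ≤ k := by exact_mod_cast hk
      have hinv : (k : ℝ)⁻¹ ≤ 2 / (k + 1) := by
        rw [inv_eq_one_div, div_le_div_iff₀ (by positivity) (by positivity)]
        linarith
      rw [if_neg hk.ne', mul_zero, sub_zero, ← mul_div_assoc, mul_comm 2, mul_div_assoc]
      exact mul_le_mul_of_nonneg_left hinv (nonneg hp0 hp1)
  simpa [sum_sub_distrib, ← mul_sum] using h

lemma sum_inv_le_sum_div_succ_add (hp0 : 0 ≤ p) (hp1 : p ≤ 1) (n : ℕ) :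
    ∑ k ∈ range (n + 1), binomialWeight n p k * (k : ℝ)⁻¹
      ≤ ∑ k ∈ range (n + 1), binomialWeight n p k / (k + 1)
        + 3 * ∑ k ∈ range (n + 1), binomialWeight n p k / ((k + 1) * (k + 2)) := by
  rw [mul_sum, ← sum_add_distrib]
  refine sum_le_sum fun k _ => ?_
  have hinv : (k : ℝ)⁻¹ ≤ 1 / (k + 1) + 3 / ((k + 1) * (k + 2)) := by
    rcases k.eq_zero_or_pos with rfl | hk
    · norm_num
    · have hk' : (1 : ℝ) ≤ k := by exact_mod_cast hk
      rw [inv_eq_one_div, div_add_div _ _ (by positivity) (by positivity),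
        div_le_div_iff₀ (by positivity) (by positivity)]
      nlinarith
  calc binomialWeight n p k * (k : ℝ)⁻¹
      ≤ binomialWeight n p k * (1 / (k + 1) + 3 / ((k + 1) * (k + 2))) :=
        mul_le_mul_of_nonneg_left hinv (nonneg hp0 hp1)
    _ = _ := by ring

lemma sum_filter_pos (n : ℕ) (p : ℝ) :
    ∑ k ∈ range (n + 1) with 0 < k, binomialWeight n p k = 1 - (1 - p) ^ n := by
  have h := sum_eq_one n p
  rw [sum_range_succ', zero_right] at h
  rw [sum_filter, sum_range_succ']
  simp only [Nat.succ_pos, if_true, lt_irrefl, if_false, add_zero]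
  linarith

lemma sq_one_sub_pow_le_mul_sum_inv (hp0 : 0 ≤ p) (hp1 : p ≤ 1) (n : ℕ) :
    (1 - (1 - p) ^ n) ^ 2 ≤ n * p * ∑ k ∈ range (n + 1), binomialWeight n p k * (k : ℝ)⁻¹ := by
  rw [← sum_filter_pos, ← sum_mul_cast]
  exact sq_sum_filter_pos_le_sum_mul_sum_inv fun k _ => nonneg hp0 hp1

lemma mul_sum_inv_le_two_mul (hp0 : 0 ≤ p) (hp1 : p ≤ 1) (n : ℕ) :
    n * p * ∑ k ∈ range (n + 1), binomialWeight n p k * (k : ℝ)⁻¹ ≤ 2 * (1 - (1 - p) ^ n) := by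
  set T := ∑ k ∈ range (n + 1), binomialWeight n p k / (k + 1)
  set X := (1 - p) ^ n
  have hT : (n + 1) * p * T = 1 - X * (1 - p) := by rw [← pow_succ]; exact mul_sum_div_succ n p
  have hX : 0 ≤ X := pow_nonneg (sub_nonneg.2 hp1) n
  have hX1 : X ≤ 1 := pow_le_one₀ (sub_nonneg.2 hp1) (by linarith)
  have hkey : (n + 1) * (2 * (1 - X) - n * p * (2 * T - 2 * X)) = 2 * (1 - X + n ^ 2 * p * X) := by
    linear_combination (-2 * (n : ℝ)) * hT
  have hpos : 0 ≤ 2 * (1 - X) - n * p * (2 * T - 2 * X) := by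
    refine nonneg_of_mul_nonneg_right (a := (n + 1 : ℝ)) ?_ (by positivity)
    rw [hkey]
    have : 0 ≤ (n : ℝ) ^ 2 * p * X := by positivity
    linarith
  calc n * p * ∑ k ∈ range (n + 1), binomialWeight n p k * (k : ℝ)⁻¹
      ≤ n * p * (2 * T - 2 * X) :=
        mul_le_mul_of_nonneg_left (sum_inv_le_two_mul_sum_div_succ hp0 hp1 n) (by positivity)
    _ ≤ 2 * (1 - X) := by linarith

lemma mul_sum_inv_le_one_add (hn : 0 < n) (hp0 : 0 < p) (hp1 : p ≤ 1) :
    n * p * ∑ k ∈ range (n + 1), binomialWeight n p k * (k : ℝ)⁻¹ ≤ 1 + 3 / (n * p) := by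
  set T := ∑ k ∈ range (n + 1), binomialWeight n p k / (k + 1)
  set U := ∑ k ∈ range (n + 1), binomialWeight n p k / ((k + 1) * (k + 2))
  have hμ : 0 < (n : ℝ) * p := by positivity
  have hT0 : 0 ≤ T := sum_nonneg fun k _ => div_nonneg (nonneg hp0.le hp1) (by positivity)
  have hU0 : 0 ≤ U := sum_nonneg fun k _ => div_nonneg (nonneg hp0.le hp1) (by positivity)
  have hT : n * p * T ≤ 1 := by
    have h := mul_sum_div_succ n p
    have : 0 ≤ (1 - p) ^ (n + 1) := pow_nonneg (sub_nonneg.2 hp1) _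
    nlinarith
  have hU : n * p * U ≤ 1 / (n * p) := by
    have h := mul_sum_div_succ_mul_succ_le hp0.le hp1 n
    rw [le_div_iff₀ hμ]
    have : (n : ℝ) * p * U * (n * p) ≤ (n + 1) * (n + 2) * p ^ 2 * U := by
      have : (n : ℝ) ^ 2 ≤ (n + 1) * (n + 2) := by nlinarith
      nlinarith [mul_nonneg (sq_nonneg p) hU0]
    linarith
  calc n * p * ∑ k ∈ range (n + 1), binomialWeight n p k * (k : ℝ)⁻¹
      ≤ n * p * (T + 3 * U) :=
        mul_le_mul_of_nonneg_left (sum_inv_le_sum_div_succ_add hp0.le hp1 n) hμ.le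
    _ = n * p * T + 3 * (n * p * U) := by ring
    _ ≤ 1 + 3 * (1 / (n * p)) := by linarith
    _ = 1 + 3 / (n * p) := by ring

end binomialWeight

section Probability

variable {Ω : Type*} [MeasureSpace Ω] [IsProbabilityMeasure (ℙ : Measure Ω)] {Z : Ω → ℕ}

lemma map_eq_binomial (hZ : Measurable Z) {n : ℕ} (p : I)
    (hbin : ∀ k : ℕ, (ℙ {ω | Z ω = k}).toReal = binomialWeight n p k) :
    (ℙ : Measure Ω).map Z = Bin(n, p) := by
  refine Measure.ext_of_measureReal_singleton fun k ↦ ?_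
  rw [map_measureReal_apply hZ (measurableSet_singleton k), binomial_real_singleton]
  exact hbin k

lemma integral_comp_eq_sum_binomialWeight (hZ : Measurable Z) {n : ℕ} {p : ℝ} (hp0 : 0 ≤ p)
    (hp1 : p ≤ 1) (hbin : ∀ k : ℕ, (ℙ {ω | Z ω = k}).toReal = binomialWeight n p k)
    (g : ℕ → ℝ) :
    ∫ ω, g (Z ω) = ∑ k ∈ range (n + 1), binomialWeight n p k * g k := by
  rw [← integral_map hZ.aemeasurable .of_discrete, map_eq_binomial hZ ⟨p, hp0, hp1⟩ hbin,
    integral_binomial, Nat.range_succ_eq_Iic]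
  rfl

end Probability

theorem stmt_0_general {Ω : Type*} [MeasureSpace Ω] [IsProbabilityMeasure (ℙ : Measure Ω)]
    (n : ℕ) (p : ℝ) (hn : 1 ≤ n) (hp0 : 0 < p) (hp1 : p ≤ 1)
    (Z : Ω → ℕ) (hZmeas : Measurable Z)
    (hbin : ∀ k : ℕ,
      (ℙ {ω | Z ω = k}).toReal = (n.choose k : ℝ) * p ^ k * (1 - p) ^ (n - k)) :
    1 - Real.exp (-((n : ℝ) * p)) ≤
        (∫ ω, (Z ω : ℝ)) *
          ((∫ ω in {ω | 0 < Z ω}, ((Z ω : ℝ))⁻¹) / (ℙ {ω | 0 < Z ω}).toReal) ∧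
      (∫ ω, (Z ω : ℝ)) *
          ((∫ ω in {ω | 0 < Z ω}, ((Z ω : ℝ))⁻¹) / (ℙ {ω | 0 < Z ω}).toReal) ≤
        min 3.2 (1 + 5.1 * ((n : ℝ) * p) ^ (-(1 / 4 : ℝ))) := by
  have hE := integral_comp_eq_sum_binomialWeight hZmeas hp0.le hp1 hbin
  -- `(0 : ℝ)⁻¹ = 0`, so the restriction to `{0 < Z}` may be dropped.
  have hS : ∫ ω in {ω | 0 < Z ω}, ((Z ω : ℝ))⁻¹ = ∫ ω, ((Z ω : ℝ))⁻¹ :=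
    setIntegral_eq_integral_of_forall_compl_eq_zero fun ω hω => by simp_all
  have hP : (ℙ {ω | 0 < Z ω}).toReal = 1 - (1 - p) ^ n := by
    have : {ω | 0 < Z ω} = {ω | Z ω = 0}ᶜ := by ext; simp [Nat.pos_iff_ne_zero]
    have hZ0 : MeasurableSet {ω | Z ω = 0} := hZmeas (measurableSet_singleton 0)
    rw [this, ← measureReal_def, probReal_compl_eq_one_sub hZ0, measureReal_def, hbin 0]
    simp
  have hP0 : 0 < 1 - (1 - p) ^ n := sub_pos.2 (pow_lt_one₀ (by linarith) (by linarith) (by omega))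
  have hμ : 0 < (n : ℝ) * p := mul_pos (by exact_mod_cast hn) hp0
  have hPexp : 1 - Real.exp (-(n * p)) ≤ 1 - (1 - p) ^ n :=
    sub_le_sub_left (one_sub_pow_le_exp_neg_mul hp1 n) 1
  have hCS := binomialWeight.sq_one_sub_pow_le_mul_sum_inv hp0.le hp1 n
  have h2 := binomialWeight.mul_sum_inv_le_two_mul hp0.le hp1 n
  rw [hS, hE, hE fun k : ℕ => (k : ℝ)⁻¹, binomialWeight.sum_mul_cast, hP, ← mul_div_assoc]
  refine ⟨hPexp.trans ((le_div_iff₀ hP0).2 (by nlinarith)), le_min ?_ ?_⟩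
  · linarith [(div_le_iff₀ hP0).2 h2]
  · exact div_le_one_add_mul_rpow hμ hP0 hPexp h2
      (binomialWeight.mul_sum_inv_le_one_add hn hp0 hp1)

/-- Bounds on `e(Z) = E[Z]·E[Z⁻¹ | Z > 0]` for a binomial random
variable `Z ~ B(n,p)` with `n ≥ 1`, `p ∈ (0,1]` and `np ≥ 1`:
`1 − e^{−np} ≤ e(Z) ≤ min(3.2, 1 + 5.1·(np)^{−1/4})`. -/
theorem stmt_0 {Ω : Type*} [MeasureSpace Ω] [IsProbabilityMeasure (ℙ : Measure Ω)]
    (n : ℕ) (p : ℝ) (hn : 1 ≤ n) (hp0 : 0 < p) (hp1 : p ≤ 1) (hnp : 1 ≤ (n : ℝ) * p)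
    (Z : Ω → ℕ) (hZmeas : Measurable Z)
    (hbin : ∀ k : ℕ,
      (ℙ {ω | Z ω = k}).toReal = (n.choose k : ℝ) * p ^ k * (1 - p) ^ (n - k)) :
    1 - Real.exp (-((n : ℝ) * p)) ≤
        (∫ ω, (Z ω : ℝ)) *
          ((∫ ω in {ω | 0 < Z ω}, ((Z ω : ℝ))⁻¹) / (ℙ {ω | 0 < Z ω}).toReal) ∧
      (∫ ω, (Z ω : ℝ)) *
          ((∫ ω in {ω | 0 < Z ω}, ((Z ω : ℝ))⁻¹) / (ℙ {ω | 0 < Z ω}).toReal) ≤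
        min 3.2 (1 + 5.1 * ((n : ℝ) * p) ^ (-(1 / 4 : ℝ))) :=
  stmt_0_general n p hn hp0 hp1 Z hZmeas hbin
end

section
/- Let a, b, c₁, c₂, c₃, c₄, κ₁, κ₂, κ₃, κ₄, c_rich > 0 and C > 1 be constants, n ∈ ℕ, and M_n an index set equipped with a map m ↦ D_m such that D_m ∈ [1,n] for every m ∈ M_n, and such that for every x ∈ [1, n − c_rich] there exists m ∈ M_n with D_m ∈ [x, x + c_rich]. Let crit₁, crit₂ : M_n → ℝ satisfy: (i) for every m ∈ M_n, crit₁(m) = (a·D_m^{−2} + b·D_m/n)(1 + ε_{1,m}) and crit₂(m) = (a·D_m^{−2} + C·b·D_m/n)(1 + ε_{2,m}), where max_{i=1,2} sup { |ε_{i,m}| : m ∈ M_n, ln(n)^{κ₁} ≤ D_m ≤ c₁·n/ln(n) } ≤ c₂·ln(n)^{−κ₂}; (ii) crit₂(m) ≥ c₃·ln(n)^{−κ₃} for every m ∈ M_n with D_m < ln(n)^{κ₁}; (iii) crit₂(m) ≥ c₄·ln(n)^{−κ₄} for every m ∈ M_n with D_m ≥ c₁·n/ln(n). Then, with K(C) :=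 2^{2/3}·3^{−1}·(C^{−1/3} − 1)² > 0, there exists n₀ > 0 depending only on a, b, (c_i)_{1≤i≤4}, (κ_i)_{1≤i≤4}, c_rich and C such that for every n ≥ n₀ and every m̂ ∈ argmin_{m∈M_n} crit₂(m), one has crit₁(m̂) ≥ (1 + K(C) − ln(n)^{−κ₂/5})·inf_{m∈M_n} crit₁(m). -/
/-!
In units `D = u · D⋆` with `D⋆ = (2an/b)^{1/3}`, the two ideal criteria are
`(b D⋆/n) · φ_c(u)` with `φ_c(u) = riskShape c u = 1/(2u²) + c u`, `c = 1` resp. `c = C`;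
`φ_1` is minimal at `u = 1` and `φ_C` at `u = t = C^{-1/3}`. Richness supplies models with `u` just above `1` and just above `t`. Comparing
with the latter, `m̂` is an almost minimizer of `φ_C`; since `crit₂ m̂` is then of order `n^{-2/3}`,
the lower bounds on `crit₂` for small and large dimensions put `m̂` in the range where the `ε`'s are
small. Almost minimizers of `φ_C` satisfy `u ≤ t + d` with `(C - 1) d = (1 - t)²/2`, hence
`φ_1(u) = φ_C(u) - (C - 1) u ≥ φ_1(t) - (1 - t)²/2 ≥ 3/2 + (t - 1)²`, which beats
`min φ_1 = 3/2` by the factor `1 + K(C)` (as `2^{2/3} ≤ 2`). All the perturbations are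
`O(ln(n)^{-κ₂} + n^{-2/3}) = o(ln(n)^{-κ₂/5})`.
-/

open Filter Real Topology

noncomputable def riskShape (c u : ℝ) : ℝ := 1 / (2 * u ^ 2) + c * u

section riskShape

variable {C t u : ℝ}

theorem riskShape_pos {c : ℝ} (hc : 0 ≤ c) (hu : 0 < u) : 0 < riskShape c u := by
  unfold riskShape; positivity

theorem riskShape_eq_min_add (hCt : C * t ^ 3 = 1) (ht : 0 < t) (hu : 0 < u) :
    riskShape C u = 3 / (2 * t ^ 2) + (u - t) ^ 2 * (2 * u + t) / (2 * u ^ 2 * t ^ 3) := by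
  obtain rfl : C = 1 / t ^ 3 := by field_simp; linarith
  unfold riskShape; field_simp; ring

theorem le_riskShape (hCt : C * t ^ 3 = 1) (ht : 0 < t) (hu : 0 < u) :
    3 / (2 * t ^ 2) ≤ riskShape C u := by
  rw [riskShape_eq_min_add hCt ht hu]; simp only [le_add_iff_nonneg_right]; positivity

theorem riskShape_le_of_mem_Icc {r : ℝ} (hCt : C * t ^ 3 = 1) (ht : 0 < t) (hr : r ≤ t)
    (hu : u ∈ Set.Icc t (t + r)) :
    riskShape C u ≤ 3 / (2 * t ^ 2) * (1 + 5 * r ^ 2 / (3 * t ^ 2)) := by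
  obtain ⟨htu, hur⟩ := hu
  rw [riskShape_eq_min_add hCt ht (ht.trans_le htu)]
  have hnum : (u - t) ^ 2 * (2 * u + t) ≤ r ^ 2 * (5 * t) :=
    mul_le_mul (pow_le_pow_left₀ (by linarith) (by linarith) 2) (by linarith) (by linarith)
      (by positivity)
  have hden : 2 * t ^ 2 * t ^ 3 ≤ 2 * u ^ 2 * t ^ 3 := by gcongr
  calc _ ≤ 3 / (2 * t ^ 2) + r ^ 2 * (5 * t) / (2 * t ^ 2 * t ^ 3) := by
        gcongr 3 / (2 * t ^ 2) + ?_
        exact div_le_div₀ (by positivity) hnum (by positivity) hden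
    _ = _ := by field_simp

theorem mul_riskShape_le_of_mem_Icc {r s e ε : ℝ} (hC : 0 ≤ C) (hCt : C * t ^ 3 = 1)
    (ht : 0 < t) (hr : r ≤ t) (hs : 0 ≤ s) (hu : u ∈ Set.Icc t (t + r)) (he : |e| ≤ ε) :
    s * riskShape C u * (1 + e) ≤ s * (3 / (2 * t ^ 2) * (1 + 5 * r ^ 2 / (3 * t ^ 2))) * (1 + ε) :=
  calc s * riskShape C u * (1 + e) ≤ s * riskShape C u * (1 + ε) :=
        mul_le_mul_of_nonneg_left (by linarith [le_abs_self e])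
          (mul_nonneg hs (riskShape_pos hC (ht.trans_le hu.1)).le)
    _ ≤ _ := mul_le_mul_of_nonneg_right
        (mul_le_mul_of_nonneg_left (riskShape_le_of_mem_Icc hCt ht hr hu) hs)
        (by linarith [abs_nonneg e])

theorem riskShape_one_ge (ht : 0 < t) (ht1 : t ≤ 1) :
    3 / 2 + 3 / 2 * (t - 1) ^ 2 ≤ riskShape 1 t := by
  have hdiff : riskShape 1 t - (3 / 2 + 3 / 2 * (t - 1) ^ 2) =
      (t - 1) ^ 2 * (1 - t) * (3 * t + 1) / (2 * t ^ 2) := by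
    unfold riskShape; field_simp; ring
  have : 0 ≤ 1 - t := by linarith
  have : 0 ≤ (t - 1) ^ 2 * (1 - t) * (3 * t + 1) / (2 * t ^ 2) := by positivity
  linarith

theorem exists_le_add_of_riskShape_le (hCt : C * t ^ 3 = 1) (ht : 0 < t) {d : ℝ} (hd : 0 < d) :
    ∃ η > 0, ∀ u > 0, riskShape C u ≤ 3 / (2 * t ^ 2) * (1 + η) → u ≤ t + d := by
  refine ⟨min 1 (2 * d ^ 2 / (9 * t ^ 2)), by positivity, fun u hu hψ => ?_⟩
  have hη1 := min_le_left 1 (2 * d ^ 2 / (9 * t ^ 2))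
  have hηd := min_le_right 1 (2 * d ^ 2 / (9 * t ^ 2))
  set η := min 1 (2 * d ^ 2 / (9 * t ^ 2))
  have hC : 0 < C := by nlinarith [pow_pos ht 3]
  -- `C u ≤ φ_C(u) ≤ 3 / t² = C · 3t`
  have hu3 : u ≤ 3 * t := by
    refine le_of_mul_le_mul_left ?_ hC
    have h3t : C * (3 * t) = 3 / (2 * t ^ 2) * 2 := by field_simp; linarith
    have : 0 ≤ 1 / (2 * u ^ 2) := by positivity
    have : 3 / (2 * t ^ 2) * (1 + η) ≤ 3 / (2 * t ^ 2) * 2 := by gcongr; linarith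
    unfold riskShape at hψ
    linarith
  have hexcess : (u - t) ^ 2 / (3 * t ^ 4) ≤ (u - t) ^ 2 * (2 * u + t) / (2 * u ^ 2 * t ^ 3) := by
    rw [div_le_div_iff₀ (by positivity) (by positivity)]
    have : 0 ≤ 3 * t * (2 * u + t) - 2 * u ^ 2 := by nlinarith
    have : 0 ≤ (u - t) ^ 2 * t ^ 3 * (3 * t * (2 * u + t) - 2 * u ^ 2) := by positivity
    nlinarith
  rw [riskShape_eq_min_add hCt ht hu] at hψ
  have hsq : (u - t) ^ 2 ≤ d ^ 2 := by
    have h1 : (u - t) ^ 2 / (3 * t ^ 4) ≤ 3 / (2 * t ^ 2) * η := by linarith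
    rw [div_le_iff₀ (by positivity)] at h1
    have h2 : 3 / (2 * t ^ 2) * η * (3 * t ^ 4) = 9 / 2 * t ^ 2 * η := by field_simp; ring
    rw [le_div_iff₀ (by positivity)] at hηd
    linarith
  linarith [abs_le_of_sq_le_sq' hsq hd.le]

theorem exists_gap_riskShape_one (hC : 1 < C) (hCt : C * t ^ 3 = 1) (ht : 0 < t) (ht1 : t < 1) :
    ∃ η > 0, ∀ u > 0, riskShape C u ≤ 3 / (2 * t ^ 2) * (1 + η) →
      3 / 2 + (t - 1) ^ 2 ≤ riskShape 1 u := by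
  have hC1 : 0 < C - 1 := sub_pos.2 hC
  obtain ⟨η, hη, hloc⟩ := exists_le_add_of_riskShape_le hCt ht
    (show 0 < (1 - t) ^ 2 / (2 * (C - 1)) by have := sub_pos.2 ht1; positivity)
  refine ⟨η, hη, fun u hu hψ => ?_⟩
  have hdrift : (C - 1) * u ≤ (C - 1) * t + (1 - t) ^ 2 / 2 := by
    have := mul_le_mul_of_nonneg_left (hloc u hu hψ) hC1.le
    have : (C - 1) * ((1 - t) ^ 2 / (2 * (C - 1))) = (1 - t) ^ 2 / 2 := by field_simp
    linarith
  have hmin_sub : 3 / (2 * t ^ 2) - (C - 1) * t = riskShape 1 t := by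
    obtain rfl : C = 1 / t ^ 3 := by field_simp; linarith
    unfold riskShape; field_simp; ring
  have hsplit : riskShape 1 u = riskShape C u - (C - 1) * u := by unfold riskShape; ring
  linarith [le_riskShape hCt ht hu, riskShape_one_ge ht ht1.le]

theorem mul_riskShape_one_ge_of_le {η K s e₁ e₂ ε : ℝ} (hC : 0 ≤ C) (hs : 0 < s) (hu : 0 < u)
    (hgap : ∀ v > 0, riskShape C v ≤ 3 / (2 * t ^ 2) * (1 + η) → 3 / 2 * (1 + K) ≤ riskShape 1 v)
    (he₁ : |e₁| ≤ ε) (he₂ : |e₂| ≤ ε) (hε : ε < 1)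
    (h : s * riskShape C u * (1 + e₂) ≤ s * (3 / (2 * t ^ 2) * (1 + η)) * (1 - ε)) :
    s * (3 / 2 * (1 + K)) * (1 - ε) ≤ s * riskShape 1 u * (1 + e₁) := by
  have hψ : riskShape C u ≤ 3 / (2 * t ^ 2) * (1 + η) := by
    refine le_of_mul_le_mul_right ?_ (mul_pos hs (sub_pos.2 hε))
    have := mul_le_mul_of_nonneg_left (show 1 - ε ≤ 1 + e₂ by linarith [neg_abs_le e₂])
      (mul_pos hs (riskShape_pos hC hu)).le
    linarith
  have := hgap u hu hψ
  calc s * (3 / 2 * (1 + K)) * (1 - ε) ≤ s * riskShape 1 u * (1 - ε) := by gcongr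
    _ ≤ _ := by
      gcongr
      · exact (mul_pos hs (riskShape_pos zero_le_one hu)).le
      · linarith [neg_abs_le e₁]

end riskShape

theorem div_add_div_eq_mul_riskShape {a b c x D Dstar : ℝ} (hb : b ≠ 0) (hx : x ≠ 0)
    (hD : D ≠ 0) (hDstar : Dstar ≠ 0) (hDstar3 : Dstar ^ 3 = 2 * a * x / b) :
    a / D ^ 2 + c * b * D / x = b * Dstar / x * riskShape c (D / Dstar) := by
  obtain rfl : a = b * Dstar ^ 3 / (2 * x) := by rw [hDstar3]; field_simp
  unfold riskShape; field_simp

theorem sub_mul_one_add_mul_one_add_le {F d h e : ℝ} (hF : 0 < F) (hh : 0 ≤ h) (he : 0 ≤ e)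
    (he1 : e ≤ 1) (hd : F * (2 * e + 2 * h) ≤ d) :
    (F - d) * ((1 + h) * (1 + e)) ≤ F * (1 - e) := by
  have hd0 : 0 ≤ d := le_trans (by positivity) hd
  nlinarith [mul_nonneg hh he, mul_nonneg hd0 (mul_nonneg hh he), mul_nonneg hd0 hh,
    mul_nonneg hd0 he, mul_nonneg (mul_nonneg hF.le hh) (sub_nonneg.2 he1)]

/-- If `f` is not bounded below, `⨅ j, f j` is the junk value `0`. -/
theorem mul_ciInf_le_of_le {ι : Type*} {f : ι → ℝ} {c y : ℝ} (i : ι) (hc : 0 ≤ c) (hy : 0 ≤ y)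
    (h : c * f i ≤ y) : c * ⨅ j, f j ≤ y := by
  by_cases hf : BddBelow (Set.range f)
  · exact (mul_le_mul_of_nonneg_left (ciInf_le hf i) hc).trans h
  · rw [Real.iInf_of_not_bddBelow hf, mul_zero]; exact hy

theorem mul_iInf_le_of_minimizer {ι : Type*} {u crit₁ crit₂ ε₁ ε₂ : ι → ℝ} {good : ι → Prop}
    {C t η K s ε r β δ : ℝ} (hC : 0 ≤ C) (hCt : C * t ^ 3 = 1) (ht : 0 < t) (ht1 : t ≤ 1)
    (hη : 0 < η) (hK : 0 ≤ K)
    (hgap : ∀ v > 0, riskShape C v ≤ 3 / (2 * t ^ 2) * (1 + η) → 3 / 2 * (1 + K) ≤ riskShape 1 v)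
    (hs : 0 < s) (hu : ∀ m, 0 < u m)
    (hcrit₁ : ∀ m, crit₁ m = s * riskShape 1 (u m) * (1 + ε₁ m))
    (hcrit₂ : ∀ m, crit₂ m = s * riskShape C (u m) * (1 + ε₂ m))
    (hgood : ∀ m, good m → |ε₁ m| ≤ ε ∧ |ε₂ m| ≤ ε) (hbad : ∀ m, ¬good m → β ≤ crit₂ m)
    (hβ : s * (3 / (2 * t ^ 2) * (1 + η)) < β) {m₁ m₂ : ι}
    (hm₁ : good m₁ ∧ u m₁ ∈ Set.Icc 1 (1 + r)) (hm₂ : good m₂ ∧ u m₂ ∈ Set.Icc t (t + r))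
    (hr : r ≤ t) (hpert : (1 + 5 * r ^ 2 / (3 * t ^ 2)) * (1 + ε) ≤ (1 + η) * (1 - ε))
    (hδ : (1 + K) * (2 * ε + 2 * (5 * r ^ 2 / 3)) ≤ δ) (hδK : δ ≤ 1 + K)
    {mhat : ι} (hmin : ∀ m, crit₂ mhat ≤ crit₂ m) :
    (1 + K - δ) * ⨅ m, crit₁ m ≤ crit₁ mhat := by
  have hε0 : 0 ≤ ε := (abs_nonneg _).trans (hgood m₁ hm₁.1).1
  have hε1 : ε < 1 := by nlinarith
  have hmhat : crit₂ mhat ≤ s * (3 / (2 * t ^ 2) * (1 + η)) * (1 - ε) :=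
    calc crit₂ mhat ≤ crit₂ m₂ := hmin m₂
      _ ≤ s * (3 / (2 * t ^ 2) * (1 + 5 * r ^ 2 / (3 * t ^ 2))) * (1 + ε) := by
        rw [hcrit₂]; exact mul_riskShape_le_of_mem_Icc hC hCt ht hr hs.le hm₂.2 (hgood m₂ hm₂.1).2
      _ ≤ _ := by rw [mul_assoc, mul_assoc, mul_assoc, mul_assoc]; gcongr
  have hgood_mhat : good mhat := by
    by_contra h
    have : s * (3 / (2 * t ^ 2) * (1 + η)) * (1 - ε) ≤ s * (3 / (2 * t ^ 2) * (1 + η)) :=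
      mul_le_of_le_one_right (by positivity) (by linarith)
    linarith [hbad mhat h]
  have hlower : s * (3 / 2 * (1 + K)) * (1 - ε) ≤ crit₁ mhat := by
    rw [hcrit₁]
    exact mul_riskShape_one_ge_of_le hC hs (hu mhat) hgap (hgood mhat hgood_mhat).1
      (hgood mhat hgood_mhat).2 hε1 (hcrit₂ mhat ▸ hmhat)
  have hupper : crit₁ m₁ ≤ s * (3 / 2 * (1 + 5 * r ^ 2 / 3)) * (1 + ε) := by
    have := mul_riskShape_le_of_mem_Icc (C := 1) (t := 1) zero_le_one (by norm_num) one_pos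
      (hr.trans ht1) hs.le hm₁.2 (hgood m₁ hm₁.1).1
    norm_num at this
    rwa [hcrit₁]
  refine mul_ciInf_le_of_le m₁ (by linarith)
    ((by positivity : 0 ≤ s * (3 / 2 * (1 + K)) * (1 - ε)).trans hlower) ?_
  calc (1 + K - δ) * crit₁ m₁
      ≤ (1 + K - δ) * (s * (3 / 2 * (1 + 5 * r ^ 2 / 3)) * (1 + ε)) := by gcongr
    _ = s * (3 / 2) * ((1 + K - δ) * ((1 + 5 * r ^ 2 / 3) * (1 + ε))) := by ring
    _ ≤ s * (3 / 2) * ((1 + K) * (1 - ε)) := mul_le_mul_of_nonneg_left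
        (sub_mul_one_add_mul_one_add_le (by linarith) (by positivity) hε0 hε1.le hδ)
        (by positivity)
    _ = s * (3 / 2 * (1 + K)) * (1 - ε) := by ring
    _ ≤ _ := hlower

theorem exists_div_mem_Icc_of_rich {ι : Type*} {D : ι → ℝ} {x crich lo hi Dstar τ : ℝ}
    (hrich : ∀ y, 1 ≤ y → y ≤ x - crich → ∃ m, y ≤ D m ∧ D m ≤ y + crich)
    (hDstar : 0 < Dstar) (hτ : τ ≤ 1) (hτ₁ : 1 ≤ τ * Dstar) (hτlo : lo ≤ τ * Dstar)
    (hx : Dstar + crich ≤ x) (hhi : Dstar + crich ≤ hi) :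
    ∃ m, (lo ≤ D m ∧ D m ≤ hi) ∧ D m / Dstar ∈ Set.Icc τ (τ + crich / Dstar) := by
  have hτD : τ * Dstar ≤ Dstar := by nlinarith
  obtain ⟨m, hml, hmr⟩ := hrich (τ * Dstar) hτ₁ (by linarith)
  refine ⟨m, ⟨hτlo.trans hml, by linarith⟩, ?_, ?_⟩
  · rwa [le_div_iff₀ hDstar]
  · rwa [div_le_iff₀ hDstar, add_mul, div_mul_cancel₀ _ hDstar.ne']

theorem mul_iInf_le_of_minimizer_of_rich {ι : Type*} {D crit₁ crit₂ ε₁ ε₂ : ι → ℝ}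
    {a b C t η K x Dstar crich lo hi ε β₃ β₄ δ : ℝ} (hb : 0 < b)
    (hDstar : 0 < Dstar) (hDstar3 : Dstar ^ 3 = 2 * a * x / b)
    (hC : 0 ≤ C) (hCt : C * t ^ 3 = 1) (ht : 0 < t) (ht1 : t ≤ 1) (hη : 0 < η) (hK : 0 ≤ K)
    (hgap : ∀ v > 0, riskShape C v ≤ 3 / (2 * t ^ 2) * (1 + η) → 3 / 2 * (1 + K) ≤ riskShape 1 v)
    (htD₁ : 1 ≤ t * Dstar) (htDlo : lo ≤ t * Dstar) (hDx : Dstar + crich ≤ x)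
    (hDhi : Dstar + crich ≤ hi) (hr : crich ≤ t * Dstar)
    (hpert : (1 + 5 * (crich / Dstar) ^ 2 / (3 * t ^ 2)) * (1 + ε) ≤ (1 + η) * (1 - ε))
    (hβ₃ : b * Dstar / x * (3 / (2 * t ^ 2) * (1 + η)) < β₃)
    (hβ₄ : b * Dstar / x * (3 / (2 * t ^ 2) * (1 + η)) < β₄)
    (hδ : (1 + K) * (2 * ε + 2 * (5 * (crich / Dstar) ^ 2 / 3)) ≤ δ) (hδK : δ ≤ 1 + K)
    (hD : ∀ m, 1 ≤ D m ∧ D m ≤ x)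
    (hrich : ∀ y, 1 ≤ y → y ≤ x - crich → ∃ m, y ≤ D m ∧ D m ≤ y + crich)
    (hcrit₁ : ∀ m, crit₁ m = (a / D m ^ 2 + b * D m / x) * (1 + ε₁ m))
    (hcrit₂ : ∀ m, crit₂ m = (a / D m ^ 2 + C * b * D m / x) * (1 + ε₂ m))
    (hmid : ∀ m, lo ≤ D m → D m ≤ hi → |ε₁ m| ≤ ε ∧ |ε₂ m| ≤ ε)
    (hsmall : ∀ m, D m < lo → β₃ ≤ crit₂ m) (hlarge : ∀ m, hi ≤ D m → β₄ ≤ crit₂ m)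
    (mhat : ι) (hmin : ∀ m, crit₂ mhat ≤ crit₂ m) :
    (1 + K - δ) * ⨅ m, crit₁ m ≤ crit₁ mhat := by
  have hx : 0 < x := one_pos.trans_le ((hD mhat).1.trans (hD mhat).2)
  have hDpos : ∀ m, 0 < D m := fun m => one_pos.trans_le (hD m).1
  have htD : t * Dstar ≤ Dstar := mul_le_of_le_one_left hDstar.le ht1
  obtain ⟨m₁, hm₁⟩ := exists_div_mem_Icc_of_rich (lo := lo) (hi := hi) (τ := 1) hrich hDstar le_rfl
    (by linarith) (by linarith) hDx hDhi
  obtain ⟨m₂, hm₂⟩ := exists_div_mem_Icc_of_rich hrich hDstar ht1 htD₁ htDlo hDx hDhi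
  refine mul_iInf_le_of_minimizer (u := fun m => D m / Dstar)
    (good := fun m => lo ≤ D m ∧ D m ≤ hi) hC hCt ht ht1 hη hK hgap (by positivity)
    (fun m => div_pos (hDpos m) hDstar) (fun m => ?_) (fun m => ?_) (fun m h => hmid m h.1 h.2)
    (fun m h => ?_) (lt_min hβ₃ hβ₄) hm₁ hm₂ (by rwa [div_le_iff₀ hDstar]) hpert hδ hδK hmin
  · rw [hcrit₁, ← div_add_div_eq_mul_riskShape hb.ne' hx.ne' (hDpos m).ne' hDstar.ne' hDstar3,
      one_mul]
  · rw [hcrit₂, ← div_add_div_eq_mul_riskShape hb.ne' hx.ne' (hDpos m).ne' hDstar.ne' hDstar3]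
  · rcases not_and_or.1 h with h | h
    · exact (min_le_left _ _).trans (hsmall m (not_le.1 h))
    · exact (min_le_right _ _).trans (hlarge m (not_le.1 h).le)

theorem tendsto_log_rpow_div_cbrt_pow (κ : ℝ) {k : ℕ} (hk : k ≠ 0) :
    Tendsto (fun x : ℝ => log x ^ κ / (x ^ ((1 : ℝ) / 3)) ^ k) atTop (𝓝 0) := by
  refine (isLittleO_log_rpow_rpow_atTop κ
    (by positivity : (0 : ℝ) < k / 3)).tendsto_div_nhds_zero.congr' ?_
  filter_upwards [eventually_ge_atTop 0] with x hx
  rw [← Real.rpow_natCast, ← Real.rpow_mul hx]; ring_nf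

theorem tendsto_log_rpow_neg {κ : ℝ} (hκ : 0 < κ) :
    Tendsto (fun x : ℝ => log x ^ (-κ)) atTop (𝓝 0) :=
  (tendsto_rpow_neg_atTop hκ).comp tendsto_log_atTop

theorem eventually_lt_mul_log_rpow_neg {f : ℝ → ℝ} {c κ : ℝ} (hc : 0 < c)
    (hf : Tendsto (fun x => f x * log x ^ κ) atTop (𝓝 0)) :
    ∀ᶠ x in atTop, f x < c * log x ^ (-κ) := by
  filter_upwards [hf.eventually_lt_const hc, tendsto_log_atTop.eventually_gt_atTop 0] with x hfx hL
  rwa [rpow_neg hL.le, ← div_eq_mul_inv, lt_div_iff₀ (rpow_pos_of_pos hL κ)]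

theorem cbrt_pow_three {x : ℝ} (hx : 0 ≤ x) : (x ^ ((1 : ℝ) / 3)) ^ 3 = x := by
  rw [← Real.rpow_natCast, ← Real.rpow_mul hx]; norm_num

theorem eventually_mul_log_rpow_le_mul_cbrt (A κ : ℝ) {c : ℝ} (hc : 0 < c) :
    ∀ᶠ x in atTop, A * log x ^ κ ≤ c * x ^ ((1 : ℝ) / 3) := by
  filter_upwards [((tendsto_log_rpow_div_cbrt_pow κ one_ne_zero).const_mul A).eventually_le_const
    (by simpa using hc), eventually_gt_atTop 0] with x hfx hx
  rwa [pow_one, ← mul_div_assoc, div_le_iff₀ (rpow_pos_of_pos hx _)] at hfx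

theorem eventually_mul_cbrt_add_le (P crich κ : ℝ) {c : ℝ} (hc : 0 < c) :
    ∀ᶠ x in atTop, P * x ^ ((1 : ℝ) / 3) + crich ≤ c * x / log x ^ κ := by
  have hlim := ((tendsto_log_rpow_div_cbrt_pow κ two_ne_zero).const_mul P).add
    ((tendsto_log_rpow_div_cbrt_pow κ three_ne_zero).const_mul crich)
  filter_upwards [hlim.eventually_le_const (by simpa using hc), eventually_gt_atTop 0,
    tendsto_log_atTop.eventually_gt_atTop 0] with x hfx hx hL
  set q := x ^ ((1 : ℝ) / 3)
  have hq : 0 < q := rpow_pos_of_pos hx _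
  rw [le_div_iff₀ (rpow_pos_of_pos hL κ)]
  calc (P * q + crich) * log x ^ κ
      = (P * (log x ^ κ / q ^ 2) + crich * (log x ^ κ / q ^ 3)) * q ^ 3 := by field_simp
    _ ≤ c * q ^ 3 := mul_le_mul_of_nonneg_right hfx (by positivity)
    _ = c * x := by rw [cbrt_pow_three hx.le]

theorem tendsto_const_div_mul_cbrt (A : ℝ) {P : ℝ} (hP : 0 < P) :
    Tendsto (fun x : ℝ => A / (P * x ^ ((1 : ℝ) / 3))) atTop (𝓝 0) :=
  tendsto_const_nhds.div_atTop ((tendsto_rpow_atTop (by norm_num)).const_mul_atTop hP)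

theorem eventually_perturbation_le (crich c₂ t : ℝ) {P κ η : ℝ} (hP : 0 < P) (hκ : 0 < κ)
    (hη : 0 < η) :
    ∀ᶠ x in atTop, (1 + 5 * (crich / (P * x ^ ((1 : ℝ) / 3))) ^ 2 / (3 * t ^ 2)) *
      (1 + c₂ * log x ^ (-κ)) ≤ (1 + η) * (1 - c₂ * log x ^ (-κ)) := by
  have hε := (tendsto_log_rpow_neg hκ).const_mul c₂
  have hr := tendsto_const_div_mul_cbrt crich hP
  have hlhs := ((tendsto_const_nhds (x := (1 : ℝ))).add
    (((hr.pow 2).const_mul 5).div_const (3 * t ^ 2))).mul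
      ((tendsto_const_nhds (x := (1 : ℝ))).add hε)
  have hrhs := (tendsto_const_nhds (x := 1 + η)).mul ((tendsto_const_nhds (x := (1 : ℝ))).sub hε)
  refine (hlhs.eventually_lt hrhs ?_).mono fun x hx => hx.le
  norm_num; linarith

theorem eventually_mul_cbrt_div_lt (A : ℝ) {c : ℝ} (κ : ℝ) (hc : 0 < c) :
    ∀ᶠ x in atTop, A * x ^ ((1 : ℝ) / 3) / x < c * log x ^ (-κ) := by
  refine eventually_lt_mul_log_rpow_neg hc
    (((tendsto_log_rpow_div_cbrt_pow κ two_ne_zero).const_mul A).congr' ?_ |>.trans (by simp))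
  filter_upwards [eventually_gt_atTop 0] with x hx
  have hq : 0 < x ^ ((1 : ℝ) / 3) := rpow_pos_of_pos hx _
  have hx3 := cbrt_pow_three hx.le
  field_simp
  linear_combination -(A * log x ^ κ) * hx3

theorem eventually_error_le (c₂ crich K : ℝ) {P κ : ℝ} (hP : 0 < P) (hκ : 0 < κ) :
    ∀ᶠ x in atTop, (1 + K) * (2 * (c₂ * log x ^ (-κ)) +
      2 * (5 * (crich / (P * x ^ ((1 : ℝ) / 3))) ^ 2 / 3)) ≤ log x ^ (-κ / 5) := by
  have hlim := ((((tendsto_log_rpow_neg (by positivity : 0 < 4 * κ / 5)).const_mul (2 * c₂)).add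
    ((tendsto_log_rpow_div_cbrt_pow (κ / 5) two_ne_zero).const_mul
      (10 / 3 * (crich / P) ^ 2))).const_mul (1 + K))
  have hlim' : Tendsto (fun x => (1 + K) * (2 * (c₂ * log x ^ (-κ)) +
      2 * (5 * (crich / (P * x ^ ((1 : ℝ) / 3))) ^ 2 / 3)) * log x ^ (κ / 5)) atTop (𝓝 0) := by
    refine (hlim.congr' ?_).trans (by simp)
    filter_upwards [tendsto_log_atTop.eventually_gt_atTop 0, eventually_gt_atTop 0] with x hL hx
    have hq : 0 < x ^ ((1 : ℝ) / 3) := rpow_pos_of_pos hx _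
    rw [show -(4 * κ / 5) = -κ + κ / 5 by ring, rpow_add hL]
    field_simp
    ring
  filter_upwards [eventually_lt_mul_log_rpow_neg one_pos hlim'] with x hx
  rw [neg_div]; linarith

theorem eventually_scale_conditions (b c₂ κ₁ κ₃ κ₄ crich : ℝ) {c₁ c₃ c₄ κ₂ t η K P : ℝ}
    (hc₁ : 0 < c₁) (hc₃ : 0 < c₃) (hc₄ : 0 < c₄) (hκ₂ : 0 < κ₂) (ht : 0 < t) (hη : 0 < η)
    (hK : 0 ≤ K) (hP : 0 < P) :
    ∀ᶠ x in atTop, 1 ≤ t * (P * x ^ ((1 : ℝ) / 3)) ∧ log x ^ κ₁ ≤ t * (P * x ^ ((1 : ℝ) / 3)) ∧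
      P * x ^ ((1 : ℝ) / 3) + crich ≤ x ∧ P * x ^ ((1 : ℝ) / 3) + crich ≤ c₁ * x / log x ∧
      crich ≤ t * (P * x ^ ((1 : ℝ) / 3)) ∧
      (1 + 5 * (crich / (P * x ^ ((1 : ℝ) / 3))) ^ 2 / (3 * t ^ 2)) * (1 + c₂ * log x ^ (-κ₂)) ≤
        (1 + η) * (1 - c₂ * log x ^ (-κ₂)) ∧
      b * (P * x ^ ((1 : ℝ) / 3)) / x * (3 / (2 * t ^ 2) * (1 + η)) < c₃ * log x ^ (-κ₃) ∧
      b * (P * x ^ ((1 : ℝ) / 3)) / x * (3 / (2 * t ^ 2) * (1 + η)) < c₄ * log x ^ (-κ₄) ∧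
      (1 + K) * (2 * (c₂ * log x ^ (-κ₂)) + 2 * (5 * (crich / (P * x ^ ((1 : ℝ) / 3))) ^ 2 / 3)) ≤
        log x ^ (-κ₂ / 5) ∧
      log x ^ (-κ₂ / 5) ≤ 1 + K := by
  have htP := mul_pos ht hP
  filter_upwards [eventually_mul_log_rpow_le_mul_cbrt 1 0 htP,
    eventually_mul_log_rpow_le_mul_cbrt 1 κ₁ htP, eventually_mul_cbrt_add_le P crich 0 one_pos,
    eventually_mul_cbrt_add_le P crich 1 hc₁, eventually_mul_log_rpow_le_mul_cbrt crich 0 htP,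
    eventually_perturbation_le crich c₂ t hP hκ₂ hη,
    eventually_mul_cbrt_div_lt (b * P * (3 / (2 * t ^ 2) * (1 + η))) κ₃ hc₃,
    eventually_mul_cbrt_div_lt (b * P * (3 / (2 * t ^ 2) * (1 + η))) κ₄ hc₄,
    eventually_error_le c₂ crich K hP hκ₂,
    (tendsto_log_rpow_neg (by positivity : 0 < κ₂ / 5)).eventually_le_const
      (by linarith : 0 < 1 + K)] with x h₁ hlo hx hhi hr hpert hβ₃ hβ₄ hδ hδK
  refine ⟨by simpa [mul_assoc] using h₁, by simpa [mul_assoc] using hlo, by simpa using hx,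
    by simpa using hhi, by simpa [mul_assoc] using hr, hpert, by convert hβ₃ using 1; ring,
    by convert hβ₄ using 1; ring, hδ, by rwa [neg_div]⟩

theorem mul_rpow_neg_one_third_pow_three {C : ℝ} (hC : 0 < C) :
    C * (C ^ (-(1 : ℝ) / 3)) ^ 3 = 1 := by
  rw [← rpow_natCast, ← rpow_mul hC.le]; norm_num [rpow_neg_one]; field_simp

theorem three_halves_mul_one_add_le (t : ℝ) :
    3 / 2 * (1 + 2 ^ ((2 : ℝ) / 3) / 3 * (t - 1) ^ 2) ≤ 3 / 2 + (t - 1) ^ 2 := by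
  have h2 : (2 : ℝ) ^ ((2 : ℝ) / 3) ≤ 2 :=
    (rpow_le_rpow_of_exponent_le one_le_two (by norm_num)).trans_eq (rpow_one 2)
  nlinarith [mul_le_mul_of_nonneg_right h2 (sq_nonneg (t - 1))]

theorem stmt_3_general (a b c₁ c₂ c₃ c₄ κ₁ κ₂ κ₃ κ₄ crich C : ℝ)
    (ha : 0 < a) (hb : 0 < b) (hc₁ : 0 < c₁) (hc₃ : 0 < c₃)
    (hc₄ : 0 < c₄) (hκ₂ : 0 < κ₂) (hC : 1 < C) :
    0 < 2 ^ ((2 : ℝ) / 3) / 3 * (C ^ (-(1 : ℝ) / 3) - 1) ^ 2 ∧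
      ∃ n₀ : ℕ, 0 < n₀ ∧
        ∀ n : ℕ, n₀ ≤ n →
          ∀ (ι : Type) (D crit₁ crit₂ ε₁ ε₂ : ι → ℝ),
            (∀ m, 1 ≤ D m ∧ D m ≤ (n : ℝ)) →
            (∀ x : ℝ, 1 ≤ x → x ≤ (n : ℝ) - crich → ∃ m, x ≤ D m ∧ D m ≤ x + crich) →
            (∀ m, crit₁ m = (a / (D m) ^ 2 + b * D m / n) * (1 + ε₁ m)) →
            (∀ m, crit₂ m = (a / (D m) ^ 2 + C * b * D m / n) * (1 + ε₂ m)) →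
            (∀ m, Real.log n ^ κ₁ ≤ D m → D m ≤ c₁ * n / Real.log n →
              |ε₁ m| ≤ c₂ * Real.log n ^ (-κ₂) ∧ |ε₂ m| ≤ c₂ * Real.log n ^ (-κ₂)) →
            (∀ m, D m < Real.log n ^ κ₁ → c₃ * Real.log n ^ (-κ₃) ≤ crit₂ m) →
            (∀ m, c₁ * n / Real.log n ≤ D m → c₄ * Real.log n ^ (-κ₄) ≤ crit₂ m) →
            ∀ mhat : ι, (∀ m, crit₂ mhat ≤ crit₂ m) →
              (1 + 2 ^ ((2 : ℝ) / 3) / 3 * (C ^ (-(1 : ℝ) / 3) - 1) ^ 2 -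
                  Real.log n ^ (-κ₂ / 5)) * (⨅ m, crit₁ m) ≤ crit₁ mhat := by
  have hC0 : 0 < C := one_pos.trans hC
  set t := C ^ (-(1 : ℝ) / 3)
  have ht0 : 0 < t := rpow_pos_of_pos hC0 _
  have ht1 : t < 1 := rpow_lt_one_of_one_lt_of_neg hC (by norm_num)
  have hCt : C * t ^ 3 = 1 := mul_rpow_neg_one_third_pow_three hC0
  have hK : 0 < 2 ^ ((2 : ℝ) / 3) / 3 * (t - 1) ^ 2 := by
    have := sub_ne_zero.2 ht1.ne; positivity
  refine ⟨hK, ?_⟩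
  obtain ⟨η, hη, hgap⟩ := exists_gap_riskShape_one hC hCt ht0 ht1
  set P := (2 * a / b) ^ ((1 : ℝ) / 3)
  have hP : 0 < P := by positivity
  obtain ⟨N, hN⟩ := eventually_atTop.1 <| tendsto_natCast_atTop_atTop.eventually <|
    eventually_scale_conditions b c₂ κ₁ κ₃ κ₄ crich hc₁ hc₃ hc₄ hκ₂ ht0 hη hK.le hP
  refine ⟨N + 1, N.succ_pos, fun n hn ι D crit₁ crit₂ ε₁ ε₂ hD hrich hcrit₁ hcrit₂ hmid hsmall
    hlarge mhat hmin => ?_⟩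
  obtain ⟨htD₁, htDlo, hDx, hDhi, hr, hpert, hβ₃, hβ₄, hδ, hδK⟩ := hN n (by omega)
  have hn0 : (0 : ℝ) < n := Nat.cast_pos.2 (by omega)
  have hDstar3 : (P * (n : ℝ) ^ ((1 : ℝ) / 3)) ^ 3 = 2 * a * n / b := by
    rw [mul_pow, cbrt_pow_three (by positivity), cbrt_pow_three hn0.le]; ring
  exact mul_iInf_le_of_minimizer_of_rich hb (mul_pos hP (rpow_pos_of_pos hn0 _)) hDstar3 hC0.le
    hCt ht0 ht1.le hη hK.le (fun v hv h => (three_halves_mul_one_add_le t).trans (hgap v hv h))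
    htD₁ htDlo hDx hDhi hr hpert hβ₃ hβ₄ hδ hδK hD hrich hcrit₁ hcrit₂ hmid hsmall hlarge mhat hmin

/-- Deterministic lemma on bias in model selection: if
`crit₁(m) = (a D_m⁻² + b D_m/n)(1+ε₁ₘ)` and `crit₂(m) = (a D_m⁻² + C b D_m/n)(1+ε₂ₘ)`
with `ε` small on the middle range of dimensions, and `crit₂` is bounded below on
small and large dimensions, then (for `n` large enough, depending only on the
constants) any minimizer `m̂` of `crit₂` satisfies
`crit₁(m̂) ≥ (1 + K(C) − ln(n)^{−κ₂/5})·inf_m crit₁(m)` with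
`K(C) = 2^{2/3}·3⁻¹·(C^{−1/3}−1)² > 0`. -/
theorem stmt_3 (a b c₁ c₂ c₃ c₄ κ₁ κ₂ κ₃ κ₄ crich C : ℝ)
    (ha : 0 < a) (hb : 0 < b) (hc₁ : 0 < c₁) (hc₂ : 0 < c₂) (hc₃ : 0 < c₃)
    (hc₄ : 0 < c₄) (hκ₁ : 0 < κ₁) (hκ₂ : 0 < κ₂) (hκ₃ : 0 < κ₃) (hκ₄ : 0 < κ₄)
    (hcrich : 0 < crich) (hC : 1 < C) :
    0 < 2 ^ ((2 : ℝ) / 3) / 3 * (C ^ (-(1 : ℝ) / 3) - 1) ^ 2 ∧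
      ∃ n₀ : ℕ, 0 < n₀ ∧
        ∀ n : ℕ, n₀ ≤ n →
          ∀ (ι : Type) (D crit₁ crit₂ ε₁ ε₂ : ι → ℝ),
            (∀ m, 1 ≤ D m ∧ D m ≤ (n : ℝ)) →
            (∀ x : ℝ, 1 ≤ x → x ≤ (n : ℝ) - crich → ∃ m, x ≤ D m ∧ D m ≤ x + crich) →
            (∀ m, crit₁ m = (a / (D m) ^ 2 + b * D m / n) * (1 + ε₁ m)) →
            (∀ m, crit₂ m = (a / (D m) ^ 2 + C * b * D m / n) * (1 + ε₂ m)) →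
            (∀ m, Real.log n ^ κ₁ ≤ D m → D m ≤ c₁ * n / Real.log n →
              |ε₁ m| ≤ c₂ * Real.log n ^ (-κ₂) ∧ |ε₂ m| ≤ c₂ * Real.log n ^ (-κ₂)) →
            (∀ m, D m < Real.log n ^ κ₁ → c₃ * Real.log n ^ (-κ₃) ≤ crit₂ m) →
            (∀ m, c₁ * n / Real.log n ≤ D m → c₄ * Real.log n ^ (-κ₄) ≤ crit₂ m) →
            ∀ mhat : ι, (∀ m, crit₂ mhat ≤ crit₂ m) →
              (1 + 2 ^ ((2 : ℝ) / 3) / 3 * (C ^ (-(1 : ℝ) / 3) - 1) ^ 2 -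
                  Real.log n ^ (-κ₂ / 5)) * (⨅ m, crit₁ m) ≤ crit₁ mhat :=
  stmt_3_general a b c₁ c₂ c₃ c₄ κ₁ κ₂ κ₃ κ₄ crich C ha hb hc₁ hc₃ hc₄ hκ₂ hC
end

section
/- In the histogram regression framework, E[ Σ_{λ∈Λ_m} p_λ·1_{p̂_λ>0}·(β̂_λ − β_λ)² ] = n⁻¹ Σ_{λ∈Λ_m} e⁰(n,p_λ)·σ_λ², where e⁰(n,p) := E[Z]·E[Z⁻¹·1_{Z>0}] for Z following the binomial distribution B(n,p). -/
/-!
The cells do not interact, so fix one cell `B` and put `v = y - β` on it; with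
`N = #{k | X_k ∈ B}` we get `1{N > 0} (β̂ - β)² = (Σ_{X_k ∈ B} v(Z_k) / N)²`. Splitting according
to the value `S` of the random set `{k | X_k ∈ B}`, this square is
`Σ_S |S|⁻² Σ_{i,j ∈ S} 1{∀ k, X_k ∈ B ↔ k ∈ S} v(Z_i) v(Z_j)`, and each summand is a product of
functions of the independent `Z_k`. Since `v` is centred on `B`, the terms with `i ≠ j` vanish,
while those with `i = j` equal `(∫_B v²) p^(|S|-1) (1-p)^(n-|S|)`. Grouping the subsets by
cardinality gives the binomial sum that defines `e⁰(n, p)`.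
-/

open MeasureTheory ProbabilityTheory Finset

lemma measureReal_mul_setIntegral_div {α : Type*} [MeasurableSpace α] (μ : Measure α)
    [IsFiniteMeasure μ] (s : Set α) (f : α → ℝ) :
    μ.real s * ((∫ x in s, f x ∂μ) / μ.real s) = ∫ x in s, f x ∂μ := by
  simpa [setAverage_eq, div_eq_inv_mul] using measure_smul_setAverage f (measure_ne_top μ s)

lemma setIntegral_sub_setIntegral_div_eq_zero {α : Type*} [MeasurableSpace α] {μ : Measure α}
    [IsFiniteMeasure μ] {s : Set α} {f : α → ℝ} (hf : IntegrableOn f s μ) :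
    ∫ x in s, (f x - (∫ y in s, f y ∂μ) / μ.real s) ∂μ = 0 := by
  rw [integral_sub hf (integrable_const _), setIntegral_const, smul_eq_mul,
    measureReal_mul_setIntegral_div, sub_self]

lemma ProbabilityTheory.iIndepFun.map_fun_eq_pi_of_map_eq {Ω E ι : Type*} [MeasurableSpace Ω]
    [MeasurableSpace E] [Fintype ι] {μ : Measure Ω} {P : Measure E} {Z : ι → Ω → E}
    (hZ : ∀ i, AEMeasurable (Z i) μ) (hlaw : ∀ i, μ.map (Z i) = P) (hind : iIndepFun Z μ) :
    μ.map (fun ω i => Z i ω) = Measure.pi fun _ => P := by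
  rw [hind.map_fun_eq_pi_map hZ]
  simp only [hlaw]

section CellMean

open scoped Classical

variable {E ι : Type*}

-- `0` when no coordinate lies in `B` (as `x / 0 = 0`), which accounts for the factor `1{p̂ > 0}`.
noncomputable def cellMean [Fintype ι] (B : Set E) (v : E → ℝ) (x : ι → E) : ℝ :=
  (∑ k, B.indicator v (x k)) / ∑ k, B.indicator (fun _ => 1) (x k)

-- Factorises `1{∀ k, x k ∈ B ↔ k ∈ S} * v (x i) * v (x j)` over the coordinates of `x`.
noncomputable def pairFactor (B : Set E) (v : E → ℝ) (S : Finset ι) (i j k : ι) : E → ℝ :=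
  (if k ∈ S then B else Bᶜ).indicator fun z =>
    (if k = i then v z else 1) * (if k = j then v z else 1)

lemma integrable_pairFactor [MeasurableSpace E] {P : Measure E} [IsFiniteMeasure P] {B : Set E}
    {v : E → ℝ} (hB : MeasurableSet B) (hv : MemLp v 2 P) (S : Finset ι) (i j k : ι) :
    Integrable (pairFactor B v S i j k) P := by
  have hC : MeasurableSet (if k ∈ S then B else Bᶜ) := by split_ifs <;> simp [hB]
  refine Integrable.indicator ?_ hC
  have hv1 : Integrable v P := hv.integrable one_le_two
  split_ifs
  · simpa [sq] using hv.integrable_sq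
  · simpa using hv1
  · simpa using hv1
  · simp

variable [Fintype ι]

lemma prod_pairFactor (B : Set E) (v : E → ℝ) (S : Finset ι) (i j : ι) (x : ι → E) :
    ∏ k, pairFactor B v S i j k (x k) =
      if univ.filter (fun k => x k ∈ B) = S then v (x i) * v (x j) else 0 := by
  by_cases h : univ.filter (fun k => x k ∈ B) = S
  · have hmem (k : ι) : x k ∈ (if k ∈ S then B else Bᶜ) := by
      subst h; by_cases hk : x k ∈ B <;> simp [hk]
    simp only [pairFactor, Set.indicator_of_mem (hmem _), prod_mul_distrib, prod_ite_eq',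
      mem_univ, if_true, if_pos h]
  · obtain ⟨k, hk⟩ : ∃ k, x k ∉ (if k ∈ S then B else Bᶜ) := by
      contrapose! h; ext k; specialize h k; by_cases hk : k ∈ S <;> simp_all
    rw [if_neg h]
    exact prod_eq_zero (mem_univ k) (Set.indicator_of_notMem hk _)

lemma cellMean_sq_eq_sum_powerset (B : Set E) (v : E → ℝ) (x : ι → E) :
    cellMean B v x ^ 2 = ∑ S ∈ univ.powerset,
      ((#S : ℝ)⁻¹) ^ 2 * ∑ i ∈ S, ∑ j ∈ S, ∏ k, pairFactor B v S i j k (x k) := by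
  have hmean : cellMean B v x =
      (∑ k ∈ univ.filter fun k => x k ∈ B, v (x k)) / #(univ.filter fun k => x k ∈ B) := by
    simp only [cellMean, Set.indicator_apply, ← sum_filter, sum_const, nsmul_one]
  simp only [hmean, prod_pairFactor]
  generalize univ.filter (fun k => x k ∈ B) = S₀
  rw [sum_eq_single_of_mem S₀ (mem_powerset.mpr (subset_univ _)) fun S _ hS => by
    simp [Ne.symm hS]]
  simp only [if_true, ← sum_mul_sum]
  ring

variable [MeasurableSpace E] {P : Measure E} [IsProbabilityMeasure P] {B : Set E} {v : E → ℝ}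

lemma prod_integral_pairFactor (hB : MeasurableSet B)
    (hv0 : ∫ z in B, v z ∂P = 0) {S : Finset ι} {i j : ι} (hi : i ∈ S) :
    ∏ k, ∫ z, pairFactor B v S i j k z ∂P = if i = j then
      (∫ z in B, v z ^ 2 ∂P) * P.real B ^ (#S - 1) * (1 - P.real B) ^ (Fintype.card ι - #S)
    else 0 := by
  split_ifs with hij
  · subst hij
    have hfactor (k : ι) : ∫ z, pairFactor B v S i i k z ∂P =
        if k ∈ S then (if k = i then ∫ z in B, v z ^ 2 ∂P else P.real B)
        else 1 - P.real B := by
      by_cases hk : k ∈ S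
      · by_cases hki : k = i
        · subst hki; simp [pairFactor, hk, integral_indicator hB, sq]
        · simp [pairFactor, hk, hki, integral_indicator hB]
      · have hki : k ≠ i := fun h => hk (h ▸ hi)
        simp [pairFactor, hk, hki, integral_indicator hB.compl, probReal_compl_eq_one_sub hB]
    rw [prod_congr rfl fun k _ => hfactor k, prod_ite, filter_univ_mem, ← mul_prod_erase _ _ hi,
      if_pos rfl, prod_congr rfl fun k hk => if_neg (ne_of_mem_erase hk), prod_const, prod_const,
      card_erase_of_mem hi, filter_not, card_sdiff, filter_univ_mem, card_univ, inter_univ]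
  · refine prod_eq_zero (mem_univ i) ?_
    simpa [pairFactor, hi, hij, integral_indicator hB] using hv0

lemma integrable_cellMean_sq (hB : MeasurableSet B) (hv : MemLp v 2 P) :
    Integrable (fun x => cellMean B v x ^ 2) (Measure.pi fun _ : ι => P) := by
  simp_rw [cellMean_sq_eq_sum_powerset]
  exact integrable_finsetSum _ fun S _ => (integrable_finsetSum _ fun i _ =>
    integrable_finsetSum _ fun j _ =>
      Integrable.fintype_prod fun k => integrable_pairFactor hB hv S i j k).const_mul _

lemma integral_cellMean_sq (hB : MeasurableSet B) (hv : MemLp v 2 P)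
    (hv0 : ∫ z in B, v z ∂P = 0) :
    ∫ x, cellMean B v x ^ 2 ∂(Measure.pi fun _ : ι => P) =
      (∫ z in B, v z ^ 2 ∂P) * ∑ c ∈ Icc 1 (Fintype.card ι), (c : ℝ)⁻¹ *
        (Fintype.card ι).choose c * P.real B ^ (c - 1) *
          (1 - P.real B) ^ (Fintype.card ι - c) := by
  have hprod (S : Finset ι) (i j : ι) :=
    Integrable.fintype_prod (μ := fun _ => P) fun k => integrable_pairFactor hB hv S i j k
  have hS (S : Finset ι) :
      ∫ x, ((#S : ℝ)⁻¹) ^ 2 * ∑ i ∈ S, ∑ j ∈ S, ∏ k, pairFactor B v S i j k (x k)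
        ∂(Measure.pi fun _ : ι => P) =
      (#S : ℝ)⁻¹ * ((∫ z in B, v z ^ 2 ∂P) * P.real B ^ (#S - 1) *
        (1 - P.real B) ^ (Fintype.card ι - #S)) := by
    rw [integral_const_mul, integral_finsetSum _ fun i _ => integrable_finsetSum _ fun j _ =>
      hprod S i j]
    simp_rw [integral_finsetSum _ fun j _ => hprod _ _ j, integral_fintype_prod_eq_prod]
    rw [sum_congr rfl fun i hi => sum_congr rfl fun j _ => prod_integral_pairFactor hB hv0 hi]
    rw [sum_congr rfl fun i hi => (sum_ite_eq S i _).trans (if_pos hi), sum_const,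
      nsmul_eq_mul]
    rcases eq_or_ne (#S : ℝ) 0 with h | h
    · simp [h]
    · field_simp
  simp_rw [cellMean_sq_eq_sum_powerset]
  rw [integral_finsetSum _ fun S _ => (integrable_finsetSum _ fun i _ =>
    integrable_finsetSum _ fun j _ => hprod S i j).const_mul _]
  rw [sum_congr rfl fun S _ => hS S, sum_powerset_apply_card fun c => (c : ℝ)⁻¹ *
      ((∫ z in B, v z ^ 2 ∂P) * P.real B ^ (c - 1) * (1 - P.real B) ^ (Fintype.card ι - c)),
    card_univ, range_eq_Ico, sum_eq_sum_Ico_succ_bot (Fintype.card ι).succ_pos, zero_add,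
    Nat.succ_eq_add_one, Ico_add_one_right_eq_Icc, mul_sum]
  simp only [CharP.cast_eq_zero, inv_zero, zero_mul, smul_zero, zero_add, nsmul_eq_mul]
  exact sum_congr rfl fun c _ => by ring

end CellMean

lemma mul_sum_inv_mul_choose_mul_pow_sub_one (n : ℕ) (q : ℝ) :
    q * ∑ c ∈ Icc 1 n, (c : ℝ)⁻¹ * n.choose c * q ^ (c - 1) * (1 - q) ^ (n - c) =
      ∑ c ∈ Icc 1 n, (c : ℝ)⁻¹ * n.choose c * q ^ c * (1 - q) ^ (n - c) := by
  rw [mul_sum]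
  refine sum_congr rfl fun c hc => ?_
  rw [← mul_pow_sub_one (by grind : c ≠ 0) q]
  ring

lemma ite_sq_sub_eq_mul_cellMean_sq {𝒳 ι : Type*} [Fintype ι] (A : Set 𝒳) (x : ι → 𝒳)
    (y : ι → ℝ) (b c : ℝ) :
    (if 0 < (∑ i, A.indicator (fun _ => 1) (x i) : ℕ) then
        c * ((∑ i, A.indicator (fun _ => y i) (x i)) /
          ((∑ i, A.indicator (fun _ => 1) (x i) : ℕ) : ℝ) - b) ^ 2 else 0) =
      c * cellMean {z : 𝒳 × ℝ | z.1 ∈ A} (fun z => z.2 - b) (fun i => (x i, y i)) ^ 2 := by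
  have hcount : ((∑ i, A.indicator (fun _ => 1) (x i) : ℕ) : ℝ) =
      ∑ i, {z : 𝒳 × ℝ | z.1 ∈ A}.indicator (fun _ => 1) (x i, y i) := by
    push_cast
    exact sum_congr rfl fun i _ => by by_cases h : x i ∈ A <;> simp [h]
  have hsum : ∑ i, {z : 𝒳 × ℝ | z.1 ∈ A}.indicator (fun z => z.2 - b) (x i, y i) =
      ∑ i, A.indicator (fun _ => y i) (x i) -
        b * ((∑ i, A.indicator (fun _ => 1) (x i) : ℕ) : ℝ) := by
    push_cast
    rw [mul_sum, ← sum_sub_distrib]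
    exact sum_congr rfl fun i _ => by by_cases h : x i ∈ A <;> simp [h]
  rw [cellMean, ← hcount, hsum]
  split_ifs with hpos
  · have : ((∑ i, A.indicator (fun _ => 1) (x i) : ℕ) : ℝ) ≠ 0 := by positivity
    field_simp
  · simp [Nat.eq_zero_of_not_pos hpos]

theorem stmt_5_general {Ω : Type*} [MeasureSpace Ω]
    {𝒳 : Type*} [MeasurableSpace 𝒳] (n : ℕ)
    (X : Fin n → Ω → 𝒳) (Y : Fin n → Ω → ℝ)
    (P : Measure (𝒳 × ℝ)) (hP : IsProbabilityMeasure P)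
    (hmeas : ∀ i, Measurable fun ω => (X i ω, Y i ω))
    (hlaw : ∀ i, Measure.map (fun ω => (X i ω, Y i ω)) ℙ = P)
    (hindep : iIndepFun (fun i ω => (X i ω, Y i ω)) ℙ)
    (hY2 : Integrable (fun z : 𝒳 × ℝ => z.2 ^ 2) P)
    {Λ : Type*} [Fintype Λ]
    (I : Λ → Set 𝒳) (hI : ∀ l, MeasurableSet (I l))
    (p : Λ → ℝ) (hp : ∀ l, p l = (P {z | z.1 ∈ I l}).toReal)
    (cnt : Λ → Ω → ℕ)
    (hcnt : ∀ l ω, cnt l ω = ∑ i, Set.indicator (I l) (fun _ => 1) (X i ω))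
    (β : Λ → ℝ)
    (hβ : ∀ l, β l =
      (∫ z in {z : 𝒳 × ℝ | z.1 ∈ I l}, z.2 ∂P) / (P {z | z.1 ∈ I l}).toReal)
    (σ2 : Λ → ℝ)
    (hσ2 : ∀ l, σ2 l =
      (∫ z in {z : 𝒳 × ℝ | z.1 ∈ I l}, (z.2 - β l) ^ 2 ∂P) / (P {z | z.1 ∈ I l}).toReal)
    (βhat : Λ → Ω → ℝ)
    (hβhat : ∀ l ω, βhat l ω =
      (∑ i, Set.indicator (I l) (fun _ => Y i ω) (X i ω)) / (cnt l ω : ℝ))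
    (e0 : ℝ → ℝ)
    (he0 : ∀ q : ℝ, e0 q = (n : ℝ) * q *
      ∑ k ∈ Finset.Icc 1 n, (k : ℝ)⁻¹ * (n.choose k : ℝ) * q ^ k * (1 - q) ^ (n - k)) :
    ∫ ω, (∑ l, if 0 < cnt l ω then p l * (βhat l ω - β l) ^ 2 else 0) =
      (n : ℝ)⁻¹ * ∑ l, e0 (p l) * σ2 l := by
  have := hP
  set B : Λ → Set (𝒳 × ℝ) := fun l => {z | z.1 ∈ I l}
  set v : Λ → 𝒳 × ℝ → ℝ := fun l z => z.2 - β l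
  have hB (l : Λ) : MeasurableSet (B l) := measurable_fst (hI l)
  have hY : MemLp (fun z : 𝒳 × ℝ => z.2) 2 P :=
    (memLp_two_iff_integrable_sq measurable_snd.aestronglyMeasurable).mpr hY2
  have hv (l : Λ) : MemLp (v l) 2 P := hY.sub (memLp_const _)
  have hv0 (l : Λ) : ∫ z in B l, v l z ∂P = 0 := by
    show ∫ z in B l, (z.2 - β l) ∂P = 0
    rw [hβ l]
    exact setIntegral_sub_setIntegral_div_eq_zero (hY.integrable one_le_two).integrableOn
  have hv2 (l : Λ) : ∫ z in B l, v l z ^ 2 ∂P = p l * σ2 l := by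
    rw [hp l, hσ2 l, ← measureReal_def, measureReal_mul_setIntegral_div]
  have hsample :
      (ℙ : Measure Ω).map (fun ω i => (X i ω, Y i ω)) = Measure.pi fun _ : Fin n => P :=
    hindep.map_fun_eq_pi_of_map_eq (fun i => (hmeas i).aemeasurable) hlaw
  have hint : Integrable (fun x => ∑ l, p l * cellMean (B l) (v l) x ^ 2)
      (Measure.pi fun _ : Fin n => P) :=
    integrable_finsetSum _ fun l _ => (integrable_cellMean_sq (hB l) (hv l)).const_mul _
  calc ∫ ω, (∑ l, if 0 < cnt l ω then p l * (βhat l ω - β l) ^ 2 else 0)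
      = ∫ ω, ∑ l, p l * cellMean (B l) (v l) (fun i => (X i ω, Y i ω)) ^ 2 := by
        simp only [hβhat, hcnt, ite_sq_sub_eq_mul_cellMean_sq]; rfl
    _ = ∫ x, ∑ l, p l * cellMean (B l) (v l) x ^ 2 ∂(Measure.pi fun _ : Fin n => P) := by
        rw [← hsample, integral_map (measurable_pi_lambda _ hmeas).aemeasurable
          (hsample ▸ hint.aestronglyMeasurable)]
    _ = (n : ℝ)⁻¹ * ∑ l, e0 (p l) * σ2 l := by
        rw [integral_finsetSum _ fun l _ => (integrable_cellMean_sq (hB l) (hv l)).const_mul _,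
          mul_sum]
        refine sum_congr rfl fun l _ => ?_
        rw [integral_const_mul, integral_cellMean_sq (hB l) (hv l) (hv0 l), hv2, he0,
          Fintype.card_fin, show P.real (B l) = p l from (hp l).symm,
          ← mul_sum_inv_mul_choose_mul_pow_sub_one]
        rcases Nat.eq_zero_or_pos n with rfl | hn
        · simp
        · field_simp

/-- Histogram regression:
`E[Σ_λ p_λ 1_{p̂_λ>0}(β̂_λ−β_λ)²] = n⁻¹ Σ_λ e⁰(n,p_λ) σ_λ²`, where
`e⁰(n,p) = E[Z]·E[Z⁻¹ 1_{Z>0}]` for `Z ~ B(n,p)`, written through the explicit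
binomial formula `e⁰(n,p) = np · Σ_{k=1}^n k⁻¹ C(n,k) p^k (1−p)^{n−k}`. -/
theorem stmt_5 {Ω : Type*} [MeasureSpace Ω] [IsProbabilityMeasure (ℙ : Measure Ω)]
    {𝒳 : Type*} [MeasurableSpace 𝒳] (n : ℕ) (hn : 0 < n)
    (X : Fin n → Ω → 𝒳) (Y : Fin n → Ω → ℝ)
    (P : Measure (𝒳 × ℝ)) (hP : IsProbabilityMeasure P)
    (hmeas : ∀ i, Measurable fun ω => (X i ω, Y i ω))
    (hlaw : ∀ i, Measure.map (fun ω => (X i ω, Y i ω)) ℙ = P)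
    (hindep : iIndepFun (fun i ω => (X i ω, Y i ω)) ℙ)
    (hY2 : Integrable (fun z : 𝒳 × ℝ => z.2 ^ 2) P)
    {Λ : Type*} [Fintype Λ]
    (I : Λ → Set 𝒳) (hI : ∀ l, MeasurableSet (I l)) (hpart : ∀ x : 𝒳, ∃! l, x ∈ I l)
    (p : Λ → ℝ) (hp : ∀ l, p l = (P {z | z.1 ∈ I l}).toReal)
    (cnt : Λ → Ω → ℕ)
    (hcnt : ∀ l ω, cnt l ω = ∑ i, Set.indicator (I l) (fun _ => 1) (X i ω))
    (β : Λ → ℝ)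
    (hβ : ∀ l, β l =
      (∫ z in {z : 𝒳 × ℝ | z.1 ∈ I l}, z.2 ∂P) / (P {z | z.1 ∈ I l}).toReal)
    (σ2 : Λ → ℝ)
    (hσ2 : ∀ l, σ2 l =
      (∫ z in {z : 𝒳 × ℝ | z.1 ∈ I l}, (z.2 - β l) ^ 2 ∂P) / (P {z | z.1 ∈ I l}).toReal)
    (βhat : Λ → Ω → ℝ)
    (hβhat : ∀ l ω, βhat l ω =
      (∑ i, Set.indicator (I l) (fun _ => Y i ω) (X i ω)) / (cnt l ω : ℝ))
    (e0 : ℝ → ℝ)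
    (he0 : ∀ q : ℝ, e0 q = (n : ℝ) * q *
      ∑ k ∈ Finset.Icc 1 n, (k : ℝ)⁻¹ * (n.choose k : ℝ) * q ^ k * (1 - q) ^ (n - k)) :
    ∫ ω, (∑ l, if 0 < cnt l ω then p l * (βhat l ω - β l) ^ 2 else 0) =
      (n : ℝ)⁻¹ * ∑ l, e0 (p l) * σ2 l :=
  stmt_5_general n X Y P hP hmeas hlaw hindep hY2 I hI p hp cnt hcnt β hβ σ2 hσ2 βhat hβhat e0 he0
end

section
/- Let (p_λ)_{λ∈Λ_m} be nonnegative real numbers summing to 1, (np̂_λ)_{λ∈Λ_m} a multinomial random vector with parameters (n; (p_λ)_{λ∈Λ_m}), and γ₀ > 0. Assume card(Λ_m) ≤ n and min_{λ∈Λ_m} np_λ ≥ B_n > 0. Then there exist absolute constants L and L′ such that, on an event of probability at least 1 − L·n^{−γ₀}, the following three inequalities hold simultaneously: max_{λ∈Λ_m} { (p_λ/p̂_λ)·1_{p̂_λ>0} } ≤ L′·(γ₀+1)·ln(n); min_{λ∈Λ_m} { p_λ/p̂_λ } ≥ 1/(2 + (γ₀+1)·B_n^{−1}·ln(n)); and min_{λ∈Λ_m}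 { np̂_λ } ≥ (min_{λ∈Λ_m} np_λ)/2 − 2(γ₀+1)·ln(n). -/
/-! Each count `N_λ` is a sum of independent indicators, so its moment generating function is
dominated by that of a Poisson variable of mean `np_λ`. Chernoff's bound at `t = 1` and `t = -1`
then gives `P(N_λ ≥ 2np_λ + c) ≤ e^{-c}` and `P(N_λ ≤ np_λ/2 - 2c) ≤ e^{-c}`. With
`c = (γ₀ + 1) ln n` a union bound over the at most `n` cells excludes both deviations outside an
event of probability `2n^{-γ₀}`, and off that event the three inequalities are elementary. -/

open MeasureTheory ProbabilityTheory Real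

namespace ProbabilityTheory

variable {Ω : Type*} {mΩ : MeasurableSpace Ω} {μ : Measure Ω}

lemma measureReal_iUnion_union_le {Λ : Type*} [Fintype Λ] {U V : Λ → Set Ω} {ε : ℝ}
    (hU : ∀ l, μ.real (U l) ≤ ε) (hV : ∀ l, μ.real (V l) ≤ ε) :
    μ.real (⋃ l, U l ∪ V l) ≤ Fintype.card Λ * (2 * ε) :=
  calc _ ≤ ∑ l, μ.real (U l ∪ V l) := measureReal_iUnion_fintype_le _
    _ ≤ ∑ _l : Λ, 2 * ε := Finset.sum_le_sum fun l _ =>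
        (measureReal_union_le _ _).trans (by linarith [hU l, hV l])
    _ = Fintype.card Λ * (2 * ε) := by simp

lemma mgf_indicator_one [IsProbabilityMeasure μ] {A : Set Ω} (hA : MeasurableSet A) (t : ℝ) :
    mgf (A.indicator 1) μ t = 1 + (exp t - 1) * μ.real A := by
  have hexp : (fun ω => exp (t * A.indicator 1 ω)) =
      fun ω => A.indicator (fun _ => exp t - 1) ω + 1 := by
    funext ω
    by_cases h : ω ∈ A <;> simp [h]
  rw [mgf, hexp, integral_add ((integrable_const _).indicator hA) (integrable_const 1),
    integral_indicator_const _ hA]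
  simp only [smul_eq_mul, integral_const, probReal_univ]
  ring

lemma mgf_indicator_one_le [IsProbabilityMeasure μ] {A : Set Ω} (hA : MeasurableSet A) (t : ℝ) :
    mgf (A.indicator 1) μ t ≤ exp ((exp t - 1) * μ.real A) := by
  rw [mgf_indicator_one hA, add_comm]
  exact add_one_le_exp _

variable {ι : Type*}

lemma iIndepFun.indicator_preimage_singleton {Λ : Type*} {ξ : ι → Ω → Λ}
    (hξ : @iIndepFun Ω ι _ (fun _ => Λ) (fun _ => ⊤) ξ μ) (l : Λ) :
    iIndepFun (fun i => (ξ i ⁻¹' {l}).indicator (1 : Ω → ℝ)) μ := by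
  convert hξ.comp (fun _ => ({l} : Set Λ).indicator (1 : Λ → ℝ)) fun _ => measurable_from_top
    using 2 with i
  ext ω
  exact Set.indicator_comp_right (g := (1 : Λ → ℝ)) (ξ i)

variable [Fintype ι] {A : ι → Set Ω}

lemma iIndepFun.mgf_sum_indicator_one_le (hA : ∀ i, MeasurableSet (A i))
    (hindep : iIndepFun (fun i => (A i).indicator (1 : Ω → ℝ)) μ) (t : ℝ) :
    mgf (fun ω => ∑ i, (A i).indicator 1 ω) μ t ≤ exp ((exp t - 1) * ∑ i, μ.real (A i)) := by
  have := hindep.isProbabilityMeasure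
  rw [← Finset.sum_fn, hindep.mgf_sum fun i => measurable_one.indicator (hA i), Finset.mul_sum,
    exp_sum]
  exact Finset.prod_le_prod (fun i _ => mgf_nonneg) fun i _ => mgf_indicator_one_le (hA i) t

lemma integrable_exp_mul_sum_indicator_one [IsFiniteMeasure μ] (hA : ∀ i, MeasurableSet (A i))
    (t : ℝ) : Integrable (fun ω => exp (t * ∑ i, (A i).indicator 1 ω)) μ := by
  refine integrable_exp_mul_of_mem_Icc (a := 0) (b := Fintype.card ι)
    (Finset.measurable_sum _ fun i _ => measurable_one.indicator (hA i)).aemeasurable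
    (ae_of_all _ fun ω => ⟨?_, ?_⟩)
  · exact Finset.sum_nonneg fun i _ => Set.indicator_nonneg (fun _ _ => zero_le_one) ω
  · calc ∑ i, (A i).indicator (1 : Ω → ℝ) ω ≤ ∑ _i : ι, (1 : ℝ) :=
          Finset.sum_le_sum fun i _ => Set.indicator_le_self' (fun _ _ => zero_le_one) ω
      _ = Fintype.card ι := by simp

lemma iIndepFun.measureReal_sum_indicator_one_ge_le (hA : ∀ i, MeasurableSet (A i))
    (hindep : iIndepFun (fun i => (A i).indicator (1 : Ω → ℝ)) μ) (c : ℝ) :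
    μ.real {ω | 2 * ∑ i, μ.real (A i) + c ≤ ∑ i, (A i).indicator 1 ω} ≤ exp (-c) := by
  have := hindep.isProbabilityMeasure
  have hm : 0 ≤ ∑ i, μ.real (A i) := Finset.sum_nonneg fun i _ => measureReal_nonneg
  have he : exp 1 ≤ 3 := by linarith [exp_one_lt_d9]
  calc _ ≤ exp (-1 * (2 * ∑ i, μ.real (A i) + c)) *
          mgf (fun ω => ∑ i, (A i).indicator 1 ω) μ 1 :=
        measure_ge_le_exp_mul_mgf _ zero_le_one (integrable_exp_mul_sum_indicator_one hA 1)
    _ ≤ exp (-1 * (2 * ∑ i, μ.real (A i) + c)) * exp ((exp 1 - 1) * ∑ i, μ.real (A i)) := by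
        gcongr; exact hindep.mgf_sum_indicator_one_le hA 1
    _ ≤ exp (-c) := by
        rw [← exp_add]; gcongr; nlinarith

lemma iIndepFun.measureReal_sum_indicator_one_le_le (hA : ∀ i, MeasurableSet (A i))
    (hindep : iIndepFun (fun i => (A i).indicator (1 : Ω → ℝ)) μ) {c : ℝ} (hc : 0 ≤ c) :
    μ.real {ω | ∑ i, (A i).indicator 1 ω ≤ (∑ i, μ.real (A i)) / 2 - 2 * c} ≤ exp (-c) := by
  have := hindep.isProbabilityMeasure
  have hm : 0 ≤ ∑ i, μ.real (A i) := Finset.sum_nonneg fun i _ => measureReal_nonneg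
  have he : exp (-1) ≤ 1 / 2 := by
    rw [exp_neg, one_div]; exact inv_anti₀ two_pos (by linarith [add_one_le_exp 1])
  calc _ ≤ exp (-(-1) * ((∑ i, μ.real (A i)) / 2 - 2 * c)) *
          mgf (fun ω => ∑ i, (A i).indicator 1 ω) μ (-1) :=
        measure_le_le_exp_mul_mgf _ (by norm_num) (integrable_exp_mul_sum_indicator_one hA (-1))
    _ ≤ exp (-(-1) * ((∑ i, μ.real (A i)) / 2 - 2 * c)) *
          exp ((exp (-1) - 1) * ∑ i, μ.real (A i)) := by
        gcongr; exact hindep.mgf_sum_indicator_one_le hA (-1)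
    _ ≤ exp (-c) := by
        rw [← exp_add]; gcongr; nlinarith

lemma iIndepFun.measureReal_count_deviation_le {Λ : Type*} [Fintype Λ] {ξ : ι → Ω → Λ}
    (hξmeas : ∀ i, @Measurable Ω Λ _ ⊤ (ξ i))
    (hξindep : @iIndepFun Ω ι _ (fun _ => Λ) (fun _ => ⊤) ξ μ) {c : ℝ} (hc : 0 ≤ c) :
    μ.real (⋃ l,
      {ω | 2 * ∑ i, μ.real (ξ i ⁻¹' {l}) + c ≤ ∑ i, (ξ i ⁻¹' {l}).indicator 1 ω} ∪
      {ω | ∑ i, (ξ i ⁻¹' {l}).indicator 1 ω ≤ (∑ i, μ.real (ξ i ⁻¹' {l})) / 2 - 2 * c}) ≤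
      Fintype.card Λ * (2 * exp (-c)) := by
  have hmeas : ∀ l i, MeasurableSet (ξ i ⁻¹' {l}) := fun l i => hξmeas i trivial
  exact measureReal_iUnion_union_le
    (fun l => (hξindep.indicator_preimage_singleton l).measureReal_sum_indicator_one_ge_le
      (hmeas l) c)
    (fun l => (hξindep.indicator_preimage_singleton l).measureReal_sum_indicator_one_le_le
      (hmeas l) hc)

end ProbabilityTheory

lemma natCast_sum_indicator_singleton {ι Ω Λ : Type*} [Fintype ι] (ξ : ι → Ω → Λ) (l : Λ)
    (ω : Ω) : ((∑ i, ({l} : Set Λ).indicator (fun _ => 1) (ξ i ω) : ℕ) : ℝ) =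
      ∑ i, (ξ i ⁻¹' {l}).indicator 1 ω := by
  rw [Nat.cast_sum]
  refine Finset.sum_congr rfl fun i _ => ?_
  by_cases h : ξ i ω = l <;> simp [h]

lemma mul_exp_neg_add_one_mul_log {x : ℝ} (hx : 0 < x) (γ : ℝ) :
    x * exp (-((γ + 1) * log x)) = x ^ (-γ) := by
  rw [show -γ = 1 + -(γ + 1) by ring, rpow_add hx, rpow_one, rpow_def_of_pos hx]
  ring_nf

lemma div_le_of_half_sub_lt {a N c : ℝ} (ha : 0 ≤ a) (hc : 1 / 2 ≤ c) (hN : 1 ≤ N)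
    (hlow : a / 2 - 2 * c < N) : a / N ≤ 8 * c := by
  rcases le_or_gt a (8 * c) with hac | hac
  · exact (div_le_self ha hN).trans hac
  · rw [div_le_iff₀ (by linarith)]
    nlinarith

lemma one_div_two_add_div_le_div {a B N c : ℝ} (hB : 0 < B) (hBa : B ≤ a) (hc : 0 ≤ c)
    (hN : 0 < N) (hup : N < 2 * a + c) : 1 / (2 + c / B) ≤ a / N := by
  have hcB : c ≤ a * (c / B) := by
    rw [mul_div_assoc', le_div_iff₀ hB]
    nlinarith
  rw [div_le_div_iff₀ (by positivity) hN]
  linarith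

lemma one_sub_measureReal_le_of_compl_subset {Ω : Type*} {mΩ : MeasurableSpace Ω}
    {μ : Measure Ω} [IsProbabilityMeasure μ] {s t : Set Ω} (h : sᶜ ⊆ t) :
    1 - μ.real s ≤ μ.real t := by
  have : μ.real Set.univ ≤ μ.real s + μ.real t :=
    (measureReal_mono (by simpa [Set.compl_subset_iff_union] using h)).trans
      (measureReal_union_le s t)
  simp only [probReal_univ] at this
  linarith

/-- Control of empirical frequencies of a multinomial vector:
there are absolute constants `L, L'` such that if `(np̂_λ)_λ` is multinomial with
parameters `(n; (p_λ)_λ)`, `card Λ ≤ n` and `min_λ np_λ ≥ B_n > 0`, then on an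
event of probability at least `1 − L n^{−γ₀}`:
`max_λ (p_λ/p̂_λ)1_{p̂_λ>0} ≤ L'(γ₀+1)ln n`,
`min_λ p_λ/p̂_λ ≥ 1/(2+(γ₀+1)B_n⁻¹ ln n)` (ratio `= +∞` when `p̂_λ = 0`), and
`min_λ np̂_λ ≥ (min_λ np_λ)/2 − 2(γ₀+1)ln n`. -/
theorem stmt_16 :
    ∃ L : ℝ, 0 < L ∧ ∃ L' : ℝ, 0 < L' ∧
      ∀ (Ω : Type) (_ : MeasureSpace Ω) (_ : IsProbabilityMeasure (ℙ : Measure Ω))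
        (Λ : Type) (_ : Fintype Λ) (_ : Nonempty Λ)
        (n : ℕ) (_hn : 0 < n) (p : Λ → ℝ) (_hp0 : ∀ l, 0 ≤ p l) (_hp1 : ∑ l, p l = 1)
        (ξ : Fin n → Ω → Λ)
        (_hξmeas : ∀ i, @Measurable Ω Λ _ ⊤ (ξ i))
        (_hξindep : @iIndepFun Ω (Fin n) _ (fun _ => Λ) (fun _ => (⊤ : MeasurableSpace Λ)) ξ ℙ)
        (_hξlaw : ∀ i l, (ℙ {ω | ξ i ω = l}).toReal = p l)
        (N : Λ → Ω → ℕ)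
        (_hN : ∀ l ω, N l ω = ∑ i, Set.indicator ({l} : Set Λ) (fun _ => 1) (ξ i ω))
        (γ₀ : ℝ) (_hγ₀ : 0 < γ₀) (Bn : ℝ) (_hBn : 0 < Bn)
        (_hcard : Fintype.card Λ ≤ n) (_hB : ∀ l, Bn ≤ (n : ℝ) * p l),
        (ℙ {ω |
            (∀ l, 0 < N l ω → p l * (n : ℝ) / (N l ω : ℝ) ≤ L' * (γ₀ + 1) * Real.log n) ∧
            (∀ l, 0 < N l ω →
              1 / (2 + (γ₀ + 1) * Bn⁻¹ * Real.log n) ≤ p l * (n : ℝ) / (N l ω : ℝ)) ∧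
            (∀ l, (⨅ l' : Λ, (n : ℝ) * p l') / 2 - 2 * (γ₀ + 1) * Real.log n ≤
              (N l ω : ℝ))}).toReal ≥
          1 - L * (n : ℝ) ^ (-γ₀) := by
  refine ⟨2, two_pos, 8, by norm_num, ?_⟩
  intro Ω _ _ Λ _ _ n hn p _ _ ξ hξmeas hξindep hξlaw N hN γ₀ hγ₀ Bn hBn hcard hB
  obtain rfl | hn2 : n = 1 ∨ 2 ≤ n := by omega
  · simp only [Nat.cast_one, one_rpow, ge_iff_le]
    exact le_trans (by norm_num) ENNReal.toReal_nonneg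
  have hnpos : (0 : ℝ) < n := by positivity
  set c := (γ₀ + 1) * log n with hc_def
  have hc : 1 / 2 ≤ c := by
    have : log 2 ≤ log n := log_le_log two_pos (by exact_mod_cast hn2)
    nlinarith [log_two_gt_d9]
  have hcount : ∀ l ω, (N l ω : ℝ) = ∑ i, (ξ i ⁻¹' {l}).indicator 1 ω := fun l ω => by
    rw [hN, natCast_sum_indicator_singleton]
  have hmean : ∀ l, ∑ i, (ℙ : Measure Ω).real (ξ i ⁻¹' {l}) = n * p l := fun l => by
    simp [Set.preimage, measureReal_def, hξlaw]
  have hbad := hξindep.measureReal_count_deviation_le hξmeas (by linarith : 0 ≤ c)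
  simp only [← hcount, hmean] at hbad
  have hcard_mul : (Fintype.card Λ : ℝ) * (2 * exp (-c)) ≤ 2 * (n : ℝ) ^ (-γ₀) := by
    rw [← mul_exp_neg_add_one_mul_log hnpos, ← hc_def]
    nlinarith [exp_pos (-c), (by exact_mod_cast hcard : (Fintype.card Λ : ℝ) ≤ n)]
  refine (sub_le_sub_left (hbad.trans hcard_mul) 1).trans
    (one_sub_measureReal_le_of_compl_subset fun ω hω => ?_)
  simp only [Set.mem_compl_iff, Set.mem_iUnion, Set.mem_union, Set.mem_ofPred_eq, not_exists,
    not_or, not_le] at hω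
  refine ⟨fun l hl => ?_, fun l hl => ?_, fun l => ?_⟩
  · rw [mul_comm (p l), show 8 * (γ₀ + 1) * log n = 8 * c by rw [hc_def]; ring]
    exact div_le_of_half_sub_lt (by linarith [hB l]) hc (by exact_mod_cast hl) (hω l).2
  · rw [mul_comm (p l), show (γ₀ + 1) * Bn⁻¹ * log n = c / Bn by rw [hc_def]; ring]
    exact one_div_two_add_div_le_div hBn (hB l) (by linarith) (by exact_mod_cast hl) (hω l).1
  · have := ciInf_le (Finite.bddBelow_range fun l' => (n : ℝ) * p l') l
    linarith [(hω l).2]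
end
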